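/- arXiv:1310.4587 — 7 statements merged into one kernel-verified Lean document; each statement's English description precedes it below -/
import Mathlib

section
/- For 1 < ρ < 2, α ∈ ℂ with Re(α) > 0, and integer k > Re(α), the integral ∫₁^ρ (z-1)^α z^(-k-1) dz equals Γ(k-α)Γ(α+1)/Γ(k+1) + O(ρ^(-k)) as k → ∞, where powers take principal values. -/
open Complex MeasureTheory

/-!
The substitution `z = 1/t` turns the integral into `∫_{1/ρ}^1 t^(k-α-1) (1-t)^α dt`, which is the
Beta integral `B(k-α, α+1) = Γ(k-α)Γ(α+1)/Γ(k+1)` minus its piece over `[0, 1/ρ]`. Since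
`|(1-t)^α| ≤ 1` there, that piece is at most `∫_0^{1/ρ} t^(k-Re α-1) dt = ρ^(Re α-k)/(k-Re α)`,
and `k - Re α` stays bounded below by `1 - fract (Re α) > 0` for integers `k > Re α`.
-/

theorem intervalIntegral.integral_eq_integral_inv_sq_smul_comp_inv {E : Type*}
    [NormedAddCommGroup E] [NormedSpace ℝ E] (g : ℝ → E) {a b : ℝ} (ha : 0 < a) (hb : 0 < b) :
    ∫ z in a..b, g z = ∫ t in b⁻¹..a⁻¹, (t ^ 2)⁻¹ • g t⁻¹ := by
  have hpos : ∀ t ∈ Set.uIcc a⁻¹ b⁻¹, 0 < t := fun t ht =>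
    (lt_min (inv_pos.2 ha) (inv_pos.2 hb)).trans_le ht.1
  have hsub := integral_deriv_smul_comp_of_deriv_nonpos (g := g)
    (continuousOn_inv₀.mono fun t ht => (hpos t ht).ne')
    (fun t ht => hasDerivAt_inv (hpos t (Set.Ioo_subset_Icc_self ht)).ne')
    (fun t _ => neg_nonpos.2 (by positivity))
  rw [inv_inv, inv_inv] at hsub
  rw [← hsub, intervalIntegral.integral_symm, ← intervalIntegral.integral_neg]
  simp only [Function.comp_apply, neg_smul, neg_neg]

theorem inv_sq_smul_cpow_inv_sub_one_mul_cpow_inv (α s : ℂ) {t : ℝ} (h0 : 0 < t) (h1 : t ≤ 1) :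
    ((t ^ 2)⁻¹ : ℝ) • (((t⁻¹ - 1 : ℝ) : ℂ) ^ α * ((t⁻¹ : ℝ) : ℂ) ^ (-s - 1)) =
      (t : ℂ) ^ (s - α - 1) * (1 - (t : ℂ)) ^ α := by
  have ht0 : (t : ℂ) ≠ 0 := ofReal_ne_zero.mpr h0.ne'
  have harg : (t : ℂ).arg ≠ Real.pi := by
    rw [arg_ofReal_of_nonneg h0.le]
    exact Real.pi_ne_zero.symm
  have hinv : ∀ w : ℂ, ((t⁻¹ : ℝ) : ℂ) ^ w = (t : ℂ) ^ (-w) := fun w => by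
    rw [ofReal_inv, inv_cpow _ _ harg, ← cpow_neg]
  have hsplit : ((t⁻¹ - 1 : ℝ) : ℂ) ^ α = ((1 - t : ℝ) : ℂ) ^ α * (t : ℂ) ^ (-α) := by
    rw [show t⁻¹ - 1 = (1 - t) * t⁻¹ by field_simp, ofReal_mul,
      mul_cpow_ofReal_nonneg (by linarith) (inv_nonneg.mpr h0.le), hinv]
  have hsq : (((t ^ 2)⁻¹ : ℝ) : ℂ) = (t : ℂ) ^ (-2 : ℂ) := by
    rw [show (-2 : ℂ) = -((2 : ℕ) : ℂ) by norm_num, cpow_neg, cpow_natCast, ofReal_inv,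
      ofReal_pow]
  have hexp : (t : ℂ) ^ (s - α - 1) =
      (t : ℂ) ^ (-2 : ℂ) * ((t : ℂ) ^ (-α) * (t : ℂ) ^ (-(-s - 1))) := by
    rw [← cpow_add _ _ ht0, ← cpow_add _ _ ht0]
    ring_nf
  rw [real_smul, hsplit, hinv, hexp, hsq]
  push_cast
  ring

theorem integral_sub_one_cpow_mul_cpow_eq_integral_cpow_mul_one_sub_cpow {ρ : ℝ} (hρ : 1 ≤ ρ)
    (α s : ℂ) :
    ∫ z in (1 : ℝ)..ρ, ((z : ℂ) - 1) ^ α * (z : ℂ) ^ (-s - 1) =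
      ∫ t in ρ⁻¹..1, (t : ℂ) ^ (s - α - 1) * (1 - (t : ℂ)) ^ α := by
  have hρ0 : 0 < ρ := one_pos.trans_le hρ
  rw [intervalIntegral.integral_eq_integral_inv_sq_smul_comp_inv _ one_pos hρ0, inv_one]
  refine intervalIntegral.integral_congr fun t ht => ?_
  rw [Set.uIcc_of_le (inv_le_one_of_one_le₀ hρ)] at ht
  rw [← inv_sq_smul_cpow_inv_sub_one_mul_cpow_inv α s ((inv_pos.2 hρ0).trans_le ht.1) ht.2]
  push_cast
  rfl

theorem norm_betaIntegral_sub_integral_le {u v : ℂ} (hu : 0 < u.re) (hv : 1 ≤ v.re) {a : ℝ}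
    (ha0 : 0 ≤ a) (ha1 : a < 1) :
    ‖betaIntegral u v - ∫ t in a..1, (t : ℂ) ^ (u - 1) * (1 - (t : ℂ)) ^ (v - 1)‖ ≤
      a ^ u.re / u.re := by
  have hint := betaIntegral_convergent hu (by linarith : 0 < v.re)
  have hhead : IntervalIntegrable _ volume 0 a := hint.mono_set <| by
    rw [Set.uIcc_of_le ha0, Set.uIcc_of_le zero_le_one]
    exact Set.Icc_subset_Icc le_rfl ha1.le
  have htail : IntervalIntegrable _ volume a 1 := hint.mono_set <| by
    rw [Set.uIcc_of_le ha1.le, Set.uIcc_of_le zero_le_one]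
    exact Set.Icc_subset_Icc ha0 le_rfl
  have hre : -1 < u.re - 1 := by linarith
  rw [betaIntegral, ← intervalIntegral.integral_add_adjacent_intervals hhead htail,
    add_sub_cancel_right]
  calc _ ≤ ∫ t in (0 : ℝ)..a, t ^ (u.re - 1) := by
        refine intervalIntegral.norm_integral_le_of_norm_le ha0 (Filter.Eventually.of_forall
          fun t ht => ?_) (intervalIntegral.intervalIntegrable_rpow' hre)
        have h1t : 0 < 1 - t := by linarith [ht.2]
        rw [norm_mul, show 1 - (t : ℂ) = ((1 - t : ℝ) : ℂ) by push_cast; rfl,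
          norm_cpow_eq_rpow_re_of_pos ht.1, norm_cpow_eq_rpow_re_of_pos h1t, sub_re, sub_re,
          one_re]
        exact mul_le_of_le_one_right (Real.rpow_nonneg ht.1.le _)
          (Real.rpow_le_one h1t.le (by linarith [ht.1]) (by linarith))
    _ = a ^ u.re / u.re := by
        rw [integral_rpow (Or.inl hre), sub_add_cancel, Real.zero_rpow hu.ne', sub_zero]

theorem Int.one_sub_fract_le_sub_of_lt {x : ℝ} {n : ℤ} (h : x < n) :
    1 - Int.fract x ≤ n - x := by
  have : (⌊x⌋ : ℝ) + 1 ≤ n := by exact_mod_cast Int.floor_lt.2 h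
  rw [Int.fract]
  linarith

theorem stmt0_general (ρ : ℝ) (hρ1 : 1 < ρ) (α : ℂ) (hα : 0 < α.re) :
    ∃ C : ℝ, ∀ k : ℕ, α.re < (k : ℝ) →
      ‖(∫ z in (1:ℝ)..ρ, ((z : ℂ) - 1) ^ α * (z : ℂ) ^ (-(k : ℂ) - 1)) -
        Complex.Gamma ((k : ℂ) - α) * Complex.Gamma (α + 1) / Complex.Gamma ((k : ℂ) + 1)‖
      ≤ C * ρ ^ (-(k : ℝ)) := by
  have hρ0 : 0 < ρ := one_pos.trans hρ1
  refine ⟨ρ ^ α.re / (1 - Int.fract α.re), fun k hk => ?_⟩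
  have hu : 0 < ((k : ℂ) - α).re := by simpa using hk
  have hgap : 1 - Int.fract α.re ≤ ((k : ℂ) - α).re := by
    simpa using Int.one_sub_fract_le_sub_of_lt (n := k) (by exact_mod_cast hk)
  have hv : 1 ≤ (α + 1).re := by rw [add_re, one_re]; linarith
  have htail := norm_betaIntegral_sub_integral_le hu hv (inv_pos.2 hρ0).le
    (inv_lt_one_of_one_lt₀ hρ1)
  rw [add_sub_cancel_right, betaIntegral_eq_Gamma_mul_div _ _ hu (by linarith),
    show (k : ℂ) - α + (α + 1) = k + 1 by ring, norm_sub_rev] at htail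
  rw [integral_sub_one_cpow_mul_cpow_eq_integral_cpow_mul_one_sub_cpow hρ1.le]
  refine htail.trans ?_
  have hpow : ρ⁻¹ ^ ((k : ℂ) - α).re = ρ ^ α.re * ρ ^ (-(k : ℝ)) := by
    rw [Real.inv_rpow hρ0.le, ← Real.rpow_neg hρ0.le, ← Real.rpow_add hρ0]
    simp [sub_eq_add_neg]
  rw [hpow, div_mul_eq_mul_div]
  gcongr
  exact sub_pos.2 (Int.fract_lt_one _)

/-- Lemma 3 (first part) of Williams–Batic: for `1 < ρ < 2`, `Re α > 0` and integers
`k > Re α`, `∫₁^ρ (z-1)^α z^(-k-1) dz = Γ(k-α)Γ(α+1)/Γ(k+1) + O(ρ^(-k))` as `k → ∞`. -/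
theorem stmt0 (ρ : ℝ) (hρ1 : 1 < ρ) (hρ2 : ρ < 2) (α : ℂ) (hα : 0 < α.re) :
    ∃ C : ℝ, ∀ k : ℕ, α.re < (k : ℝ) →
      ‖(∫ z in (1:ℝ)..ρ, ((z : ℂ) - 1) ^ α * (z : ℂ) ^ (-(k : ℂ) - 1)) -
        Complex.Gamma ((k : ℂ) - α) * Complex.Gamma (α + 1) / Complex.Gamma ((k : ℂ) + 1)‖
      ≤ C * ρ ^ (-(k : ℝ)) :=
  stmt0_general ρ hρ1 α hα
end

section
/- Let F : B₁(1) → ℂ be holomorphic on the open disc of radius 1 centered at 1, let 1 < ρ < 2, and let α ∈ ℂ with Re(α) > 0. Then ∫₁^ρ (z-1)^α z^(-k-1) F(z) dz = O(k^(-Re(α)-1)) as k → ∞; more precisely, if |F| ≤ M on [1, ρ], then the integral is bounded in modulus by M·Γ(k - Re α)Γ(Re α + 1)/Γ(k+1). -/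
/-!
With `a = Re α`, the bound `‖F‖ ≤ M` reduces everything to the real kernel
`K(s) = ∫₁^ρ (x-1)^a x^(-s-1) dx`. The substitution `u = 1 - 1/x` turns `K(s)` into the incomplete
Beta integral `∫₀^(1-1/ρ) u^a (1-u)^(s-a-1) du ≤ B(a+1, s-a)`, which is the first bound. For the
second, `log x ≥ (x-1)/2` on `[1, 2]` gives `x^(-s-1) ≤ exp(-s(x-1)/2)`, so `K(s)` is at most the
Gamma integral `∫₀^∞ u^a e^(-su/2) du = (2/s)^(a+1) Γ(a+1)`.
-/

open Complex MeasureTheory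

namespace Real

theorem ofReal_integral_rpow_mul_one_sub_rpow (p q : ℝ) :
    ((∫ u in (0:ℝ)..1, u ^ (p - 1) * (1 - u) ^ (q - 1) : ℝ) : ℂ) = betaIntegral p q := by
  rw [← intervalIntegral.integral_ofReal]
  refine intervalIntegral.integral_congr fun u hu => ?_
  rw [Set.uIcc_of_le zero_le_one] at hu
  push_cast
  rw [ofReal_cpow hu.1, ofReal_cpow (sub_nonneg.2 hu.2)]
  push_cast
  rfl

theorem integral_rpow_mul_one_sub_rpow {p q : ℝ} (hp : 0 < p) (hq : 0 < q) :
    ∫ u in (0:ℝ)..1, u ^ (p - 1) * (1 - u) ^ (q - 1) = Gamma p * Gamma q / Gamma (p + q) := by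
  rw [← ofReal_inj, ofReal_integral_rpow_mul_one_sub_rpow,
    betaIntegral_eq_Gamma_mul_div _ _ (by simpa) (by simpa)]
  push_cast [← Gamma_ofReal]
  rfl

theorem intervalIntegrable_rpow_mul_one_sub_rpow {p q : ℝ} (hp : 0 < p) (hq : 0 < q) :
    IntervalIntegrable (fun u : ℝ => u ^ (p - 1) * (1 - u) ^ (q - 1)) volume 0 1 :=
  intervalIntegral.intervalIntegrable_of_integral_ne_zero <| by
    rw [integral_rpow_mul_one_sub_rpow hp hq]
    exact (div_pos (mul_pos (Gamma_pos_of_pos hp) (Gamma_pos_of_pos hq))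
      (Gamma_pos_of_pos (add_pos hp hq))).ne'

theorem sub_one_div_two_le_log {x : ℝ} (hx1 : 1 ≤ x) (hx2 : x ≤ 2) : (x - 1) / 2 ≤ log x := by
  have hx0 : 0 < x := by linarith
  calc (x - 1) / 2 ≤ (x - 1) / x := div_le_div_of_nonneg_left (by linarith) hx0 hx2
    _ = 1 - x⁻¹ := by field_simp
    _ ≤ log x := one_sub_inv_le_log_of_pos hx0

theorem rpow_neg_le_exp_neg_mul_sub_one {x s : ℝ} (hx1 : 1 ≤ x) (hx2 : x ≤ 2) (hs : 0 ≤ s) :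
    x ^ (-s) ≤ exp (-(s / 2 * (x - 1))) := by
  rw [rpow_def_of_pos (by linarith), exp_le_exp]
  nlinarith [sub_one_div_two_le_log hx1 hx2]

theorem integral_rpow_mul_exp_neg_mul_le {a c r : ℝ} (ha : -1 < a) (hc : 0 < c) (hr : 0 ≤ r) :
    ∫ u in (0:ℝ)..r, u ^ a * exp (-(c * u)) ≤ (1 / c) ^ (a + 1) * Gamma (a + 1) := by
  have hI := integral_rpow_mul_exp_neg_mul_Ioi (a := a + 1) (by linarith) hc
  rw [add_sub_cancel_right] at hI
  have hint : IntegrableOn (fun u : ℝ => u ^ a * exp (-(c * u))) (Set.Ioi 0) :=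
    Integrable.of_integral_ne_zero <| by
      rw [hI]; exact (mul_pos (by positivity) (Gamma_pos_of_pos (by linarith))).ne'
  rw [← hI, intervalIntegral.integral_of_le hr]
  refine setIntegral_mono_set hint ?_ Set.Ioc_subset_Ioi_self.eventuallyLE
  filter_upwards [ae_restrict_mem measurableSet_Ioi] with u (hu : 0 < u)
  positivity

end Real

theorem integral_sub_one_rpow_mul_rpow_eq {ρ a : ℝ} (hρ : 1 ≤ ρ) (ha : 0 ≤ a) (b : ℝ) :
    ∫ x in (1:ℝ)..ρ, (x - 1) ^ a * x ^ (-a - b - 2)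
      = ∫ u in (0:ℝ)..(1 - ρ⁻¹), u ^ a * (1 - u) ^ b := by
  have hpos : ∀ x ∈ Set.uIcc 1 ρ, 0 < x := fun x hx => by
    rw [Set.uIcc_of_le hρ] at hx; linarith [hx.1]
  have hderiv : ∀ x ∈ Set.uIcc 1 ρ, HasDerivAt (fun y : ℝ => 1 - y⁻¹) (x ^ 2)⁻¹ x :=
    fun x hx => by simpa using (hasDerivAt_inv (hpos x hx).ne').const_sub 1
  have hcont : ContinuousOn (fun u : ℝ => u ^ a * (1 - u) ^ b)
      ((fun y : ℝ => 1 - y⁻¹) '' Set.uIcc 1 ρ) := by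
    refine ContinuousOn.mono (s := Set.Iio 1) ?_ ?_
    · exact (continuousOn_id.rpow_const fun _ _ => Or.inr ha).mul
        ((continuousOn_const.sub continuousOn_id).rpow_const
          fun u (hu : u < 1) => Or.inl (sub_pos.2 hu).ne')
    · rintro _ ⟨x, hx, rfl⟩
      exact sub_lt_self 1 (inv_pos.2 (hpos x hx))
  have hsub := intervalIntegral.integral_comp_mul_deriv' hderiv
    ((continuousOn_pow 2).inv₀ fun x hx => (pow_pos (hpos x hx) 2).ne') hcont
  simp only [inv_one, sub_self] at hsub
  rw [← hsub]
  refine intervalIntegral.integral_congr fun x hx => ?_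
  have hx0 := hpos x hx
  rw [Set.uIcc_of_le hρ] at hx
  have hx1 : 0 ≤ x - 1 := by linarith [hx.1]
  simp only [Function.comp_apply, sub_sub_cancel]
  rw [show 1 - x⁻¹ = (x - 1) * x⁻¹ by field_simp, Real.mul_rpow hx1 (by positivity),
    Real.inv_rpow hx0.le, Real.inv_rpow hx0.le, ← Real.rpow_natCast, ← Real.rpow_neg hx0.le,
    ← Real.rpow_neg hx0.le, ← Real.rpow_neg hx0.le, show -a - b - 2 = -a + -b + -(2:ℕ) by
      push_cast; ring, Real.rpow_add hx0, Real.rpow_add hx0]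
  ring

theorem intervalIntegrable_sub_one_rpow_mul_rpow {ρ a : ℝ} (hρ : 0 < ρ) (ha : 0 ≤ a) (σ : ℝ) :
    IntervalIntegrable (fun x : ℝ => (x - 1) ^ a * x ^ σ) volume 1 ρ := by
  refine ContinuousOn.intervalIntegrable ?_
  refine ((continuousOn_id.sub continuousOn_const).rpow_const fun _ _ => Or.inr ha).mul
    (continuousOn_id.rpow_const fun x hx => Or.inl ?_)
  exact (lt_of_lt_of_le (lt_min one_pos hρ) hx.1).ne'

theorem integral_sub_one_rpow_mul_rpow_le_Gamma {ρ a s : ℝ} (hρ : 1 ≤ ρ) (ha : 0 ≤ a)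
    (has : a < s) :
    ∫ x in (1:ℝ)..ρ, (x - 1) ^ a * x ^ (-s - 1)
      ≤ Real.Gamma (s - a) * Real.Gamma (a + 1) / Real.Gamma (s + 1) := by
  have hρ' : 0 < ρ⁻¹ := inv_pos.2 (by linarith)
  have hβ := Real.integral_rpow_mul_one_sub_rpow (p := a + 1) (q := s - a) (by linarith)
    (by linarith)
  have hint := Real.intervalIntegrable_rpow_mul_one_sub_rpow (p := a + 1) (q := s - a)
    (by linarith) (by linarith)
  simp only [add_sub_cancel_right] at hβ hint
  rw [show a + 1 + (s - a) = s + 1 by ring] at hβ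
  rw [show -s - 1 = -a - (s - a - 1) - 2 by ring, integral_sub_one_rpow_mul_rpow_eq hρ ha,
    mul_comm (Real.Gamma _), ← hβ]
  refine intervalIntegral.integral_mono_interval le_rfl (by linarith [inv_le_one_of_one_le₀ hρ])
    (by linarith) ?_ hint
  filter_upwards [ae_restrict_mem measurableSet_Ioc] with u hu
  have : 0 ≤ 1 - u := by linarith [hu.2]
  have : 0 ≤ u := hu.1.le
  positivity

theorem integral_sub_one_rpow_mul_rpow_le_of_le_two {ρ a s : ℝ} (hρ1 : 1 ≤ ρ) (hρ2 : ρ ≤ 2)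
    (ha : 0 ≤ a) (hs : 0 < s) :
    ∫ x in (1:ℝ)..ρ, (x - 1) ^ a * x ^ (-s - 1) ≤ (2 / s) ^ (a + 1) * Real.Gamma (a + 1) := by
  have hexp : IntervalIntegrable (fun x : ℝ => (x - 1) ^ a * Real.exp (-(s / 2 * (x - 1))))
      volume 1 ρ :=
    (((continuousOn_id.sub continuousOn_const).rpow_const fun _ _ => Or.inr ha).mul
      (by fun_prop)).intervalIntegrable
  calc ∫ x in (1:ℝ)..ρ, (x - 1) ^ a * x ^ (-s - 1)
      ≤ ∫ x in (1:ℝ)..ρ, (x - 1) ^ a * Real.exp (-(s / 2 * (x - 1))) := by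
        refine intervalIntegral.integral_mono_on hρ1
          (intervalIntegrable_sub_one_rpow_mul_rpow (by linarith) ha _) hexp fun x hx => ?_
        refine mul_le_mul_of_nonneg_left ?_ (Real.rpow_nonneg (by linarith [hx.1]) _)
        calc x ^ (-s - 1) ≤ x ^ (-s) := Real.rpow_le_rpow_of_exponent_le hx.1 (by linarith)
          _ ≤ _ := Real.rpow_neg_le_exp_neg_mul_sub_one hx.1 (hx.2.trans hρ2) hs.le
    _ = ∫ u in (0:ℝ)..(ρ - 1), u ^ a * Real.exp (-(s / 2 * u)) := by
        simpa using intervalIntegral.integral_comp_sub_right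
          (fun u : ℝ => u ^ a * Real.exp (-(s / 2 * u))) 1 (a := 1) (b := ρ)
    _ ≤ (2 / s) ^ (a + 1) * Real.Gamma (a + 1) := by
        simpa using Real.integral_rpow_mul_exp_neg_mul_le (by linarith) (half_pos hs)
          (sub_nonneg.2 hρ1)

theorem norm_integral_sub_one_cpow_mul_cpow_mul_le {ρ : ℝ} (hρ : 1 ≤ ρ) {α : ℂ}
    (hα : 0 ≤ α.re) (s : ℂ) {F : ℂ → ℂ} {M : ℝ} (hM : ∀ x ∈ Set.Icc 1 ρ, ‖F x‖ ≤ M) :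
    ‖∫ x in (1:ℝ)..ρ, ((x : ℂ) - 1) ^ α * (x : ℂ) ^ s * F x‖
      ≤ M * ∫ x in (1:ℝ)..ρ, (x - 1) ^ α.re * x ^ s.re := by
  rw [← intervalIntegral.integral_const_mul]
  refine intervalIntegral.norm_integral_le_of_norm_le hρ (.of_forall fun x hx => ?_)
    ((intervalIntegrable_sub_one_rpow_mul_rpow (by linarith) hα _).const_mul M)
  have hx1 : 0 < x - 1 := sub_pos.2 hx.1
  rw [norm_mul, norm_mul, ← ofReal_one, ← ofReal_sub, norm_cpow_eq_rpow_re_of_pos hx1,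
    norm_cpow_eq_rpow_re_of_pos (by linarith), mul_comm M]
  exact mul_le_mul_of_nonneg_left (hM x (Set.Ioc_subset_Icc_self hx))
    (mul_nonneg (Real.rpow_nonneg hx1.le _) (Real.rpow_nonneg (by linarith) _))

theorem stmt3_general (ρ : ℝ) (hρ1 : 1 < ρ) (hρ2 : ρ < 2) (α : ℂ) (hα : 0 < α.re)
    (F : ℂ → ℂ) (M : ℝ) (hM : ∀ x : ℝ, x ∈ Set.Icc 1 ρ → ‖F (x : ℂ)‖ ≤ M) :
    (∀ k : ℕ, α.re < (k : ℝ) →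
      ‖∫ z in (1:ℝ)..ρ, ((z : ℂ) - 1) ^ α * (z : ℂ) ^ (-(k : ℂ) - 1) * F (z : ℂ)‖
        ≤ M * Real.Gamma ((k : ℝ) - α.re) * Real.Gamma (α.re + 1) / Real.Gamma ((k : ℝ) + 1)) ∧
    ∃ C : ℝ, ∀ k : ℕ, 1 ≤ k →
      ‖∫ z in (1:ℝ)..ρ, ((z : ℂ) - 1) ^ α * (z : ℂ) ^ (-(k : ℂ) - 1) * F (z : ℂ)‖
        ≤ C * (k : ℝ) ^ (-α.re - 1) := by
  have hM0 : 0 ≤ M := (norm_nonneg _).trans (hM 1 ⟨le_rfl, hρ1.le⟩)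
  have hnorm (k : ℕ) := norm_integral_sub_one_cpow_mul_cpow_mul_le hρ1.le hα.le
    (-(k : ℂ) - 1) hM
  simp only [sub_re, neg_re, natCast_re, one_re] at hnorm
  refine ⟨fun k hk => ?_, M * (2 ^ (α.re + 1) * Real.Gamma (α.re + 1)), fun k hk => ?_⟩
  · rw [mul_assoc, mul_div_assoc]
    exact (hnorm k).trans (mul_le_mul_of_nonneg_left
      (integral_sub_one_rpow_mul_rpow_le_Gamma hρ1.le hα.le hk) hM0)
  · have hk0 : (0 : ℝ) < k := by exact_mod_cast hk
    refine (hnorm k).trans ((mul_le_mul_of_nonneg_left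
      (integral_sub_one_rpow_mul_rpow_le_of_le_two hρ1.le hρ2.le hα.le hk0) hM0).trans_eq ?_)
    rw [Real.div_rpow zero_le_two hk0.le, show -α.re - 1 = -(α.re + 1) by ring,
      Real.rpow_neg hk0.le]
    ring

/-- Lemma 3 (second part): if `F` is holomorphic on the open unit disc centered at `1`,
`1 < ρ < 2` and `Re α > 0`, then `∫₁^ρ (z-1)^α z^(-k-1) F(z) dz = O(k^(-Re α - 1))`;
more precisely, if `|F| ≤ M` on `[1, ρ]` then the integral is bounded in modulus by
`M Γ(k - Re α) Γ(Re α + 1) / Γ(k+1)`. -/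
theorem stmt3 (ρ : ℝ) (hρ1 : 1 < ρ) (hρ2 : ρ < 2) (α : ℂ) (hα : 0 < α.re)
    (F : ℂ → ℂ) (hF : DifferentiableOn ℂ F (Metric.ball (1 : ℂ) 1))
    (M : ℝ) (hM : ∀ x : ℝ, x ∈ Set.Icc 1 ρ → ‖F (x : ℂ)‖ ≤ M) :
    (∀ k : ℕ, α.re < (k : ℝ) →
      ‖∫ z in (1:ℝ)..ρ, ((z : ℂ) - 1) ^ α * (z : ℂ) ^ (-(k : ℂ) - 1) * F (z : ℂ)‖
        ≤ M * Real.Gamma ((k : ℝ) - α.re) * Real.Gamma (α.re + 1) / Real.Gamma ((k : ℝ) + 1)) ∧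
    ∃ C : ℝ, ∀ k : ℕ, 1 ≤ k →
      ‖∫ z in (1:ℝ)..ρ, ((z : ℂ) - 1) ^ α * (z : ℂ) ^ (-(k : ℂ) - 1) * F (z : ℂ)‖
        ≤ C * (k : ℝ) ^ (-α.re - 1) :=
  stmt3_general ρ hρ1 hρ2 α hα F M hM
end

section
/- For fixed a, b ∈ ℂ, the ratio Γ(z+a)/Γ(z+b) is asymptotic to z^(a-b) as z → ∞ along the positive real axis; i.e., Γ(z+a)/(Γ(z+b)·z^(a-b)) → 1 as z → +∞. -/
/-!
For `0 < re s`, the substitution `t = u / x` turns `x ^ s * B(s, x + 1)` into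
`∫ u in 0..x, (1 - u / x) ^ x * u ^ (s - 1)`, which tends to `Γ(s)` by dominated convergence,
the integrand being bounded by the Gamma integrand `exp (-u) * u ^ (re s - 1)`. Since
`B(s, x + 1) = Γ(s) Γ(x + 1) / Γ(x + s + 1)`, this is the theorem for `b = 1` and `1 < re a`.
The recurrence `Γ(z + 1) = z Γ(z)` changes the ratio by the factor `(x + a) / x → 1` when `a`
moves by one, which removes the condition on `re a`, and the general ratio is the quotient of
the ratios for `(a, 1)` and `(b, 1)`.
-/

open Complex Filter MeasureTheory Set
open scoped Topology

theorem Real.one_sub_div_rpow_le_exp_neg {x t : ℝ} (hx : 0 < x) (ht : t ≤ x) :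
    (1 - t / x) ^ x ≤ Real.exp (-t) :=
  calc (1 - t / x) ^ x ≤ Real.exp (-(t / x)) ^ x := by
        gcongr
        · exact sub_nonneg.2 <| div_le_one_of_le₀ ht hx.le
        · exact Real.one_sub_le_exp_neg _
    _ = Real.exp (-t) := by rw [← Real.exp_mul, neg_mul, div_mul_cancel₀ _ hx.ne']

namespace Complex

theorem integral_one_sub_div_rpow_mul_cpow (s : ℂ) {x : ℝ} (hx : 0 < x) :
    ∫ u in 0..x, ((1 - u / x) ^ x : ℝ) * (u : ℂ) ^ (s - 1) =
      (x : ℂ) ^ s * betaIntegral s (x + 1) := by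
  have hx' : (x : ℂ) ≠ 0 := ofReal_ne_zero.mpr hx.ne'
  have hxx : (x : ℂ) ^ (x : ℂ) ≠ 0 := cpow_ne_zero_iff.2 (.inl hx')
  have key : ∀ u ∈ uIcc 0 x, (u : ℂ) ^ (s - 1) * ((x : ℂ) - u) ^ ((x + 1 : ℂ) - 1) =
      (x : ℂ) ^ (x : ℂ) * (((1 - u / x) ^ x : ℝ) * (u : ℂ) ^ (s - 1)) := by
    intro u hu
    rw [uIcc_of_le hx.le] at hu
    have h1 : 0 ≤ 1 - u / x := sub_nonneg.2 <| div_le_one_of_le₀ hu.2 hx.le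
    have hsplit : (x : ℂ) - u = x * (1 - u / x : ℝ) := by
      push_cast
      rw [mul_sub, mul_one, mul_div_cancel₀ _ hx']
    rw [hsplit, add_sub_cancel_right, mul_cpow_ofReal_nonneg hx.le h1, ofReal_cpow h1]
    ring
  have := betaIntegral_scaled s (x + 1) hx
  rw [intervalIntegral.integral_congr key, intervalIntegral.integral_const_mul,
    show s + (x + 1) - 1 = x + s by ring, cpow_add _ _ hx', mul_assoc] at this
  exact mul_left_cancel₀ hxx this

theorem tendsto_integral_one_sub_div_rpow_mul_cpow {s : ℂ} (hs : 0 < s.re) :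
    Tendsto (fun x : ℝ => ∫ u in 0..x, ((1 - u / x) ^ x : ℝ) * (u : ℂ) ^ (s - 1)) atTop
      (𝓝 (Gamma s)) := by
  rw [Gamma_eq_integral hs]
  let f : ℝ → ℝ → ℂ := fun x =>
    indicator (Ioc 0 x) fun u => ((1 - u / x) ^ x : ℝ) * (u : ℂ) ^ (s - 1)
  have integral_f {x : ℝ} (hx : 0 ≤ x) :
      ∫ u in Ioi 0, f x u = ∫ u in 0..x, ((1 - u / x) ^ x : ℝ) * (u : ℂ) ^ (s - 1) := by
    rw [integral_indicator measurableSet_Ioc, intervalIntegral.integral_of_le hx,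
      Measure.restrict_restrict_of_subset Ioc_subset_Ioi_self]
  have f_meas : ∀ x, AEStronglyMeasurable (f x) (volume.restrict (Ioi 0)) := fun x =>
    (Measurable.indicator (by fun_prop) measurableSet_Ioc).aestronglyMeasurable
  have f_le : ∀ᶠ x in atTop, ∀ᵐ u ∂volume.restrict (Ioi 0),
      ‖f x u‖ ≤ Real.exp (-u) * u ^ (s.re - 1) := by
    filter_upwards [eventually_gt_atTop 0] with x hx
    filter_upwards [ae_restrict_mem measurableSet_Ioi] with u (hu : 0 < u)
    dsimp only [f]
    by_cases hux : u ≤ x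
    · rw [indicator_of_mem (mem_Ioc.2 ⟨hu, hux⟩), norm_mul, Complex.norm_of_nonneg
        (Real.rpow_nonneg (sub_nonneg.2 <| div_le_one_of_le₀ hux hx.le) _),
        norm_cpow_eq_rpow_re_of_pos hu, sub_re, one_re]
      gcongr
      exact Real.one_sub_div_rpow_le_exp_neg hx hux
    · rw [indicator_of_notMem fun h => hux h.2, norm_zero]
      positivity
  have f_tendsto : ∀ᵐ u ∂volume.restrict (Ioi 0),
      Tendsto (fun x => f x u) atTop (𝓝 (Real.exp (-u) * (u : ℂ) ^ (s - 1))) := by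
    filter_upwards [ae_restrict_mem measurableSet_Ioi] with u (hu : 0 < u)
    have hlim := (Real.tendsto_one_add_div_rpow_exp (-u)).ofReal.mul_const ((u : ℂ) ^ (s - 1))
    refine hlim.congr' ?_
    filter_upwards [eventually_ge_atTop u] with x hux
    dsimp only [f]
    rw [indicator_of_mem (mem_Ioc.2 ⟨hu, hux⟩), neg_div, ← sub_eq_add_neg]
  refine (tendsto_integral_filter_of_dominated_convergence _ (.of_forall f_meas) f_le
    (Real.GammaIntegral_convergent hs) f_tendsto).congr' ?_
  filter_upwards [eventually_ge_atTop 0] with x hx using integral_f hx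

theorem tendsto_cpow_mul_betaIntegral {s : ℂ} (hs : 0 < s.re) :
    Tendsto (fun x : ℝ => (x : ℂ) ^ s * betaIntegral s (x + 1)) atTop (𝓝 (Gamma s)) :=
  (tendsto_integral_one_sub_div_rpow_mul_cpow hs).congr' <| by
    filter_upwards [eventually_gt_atTop 0] with x hx
      using integral_one_sub_div_rpow_mul_cpow s hx

noncomputable def gammaRatio (a b : ℂ) (x : ℝ) : ℂ :=
  Gamma (x + a) / (Gamma (x + b) * (x : ℂ) ^ (a - b))

theorem gammaRatio_eq_div_gammaRatio {a b c : ℂ} {x : ℝ} (hx : x ≠ 0)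
    (hc : Gamma (x + c) ≠ 0) : gammaRatio a b x = gammaRatio a c x / gammaRatio b c x := by
  have hx' : (x : ℂ) ≠ 0 := ofReal_ne_zero.mpr hx
  have hpow : (x : ℂ) ^ (a - c) = (x : ℂ) ^ (a - b) * (x : ℂ) ^ (b - c) := by
    rw [← cpow_add _ _ hx', sub_add_sub_cancel]
  have hbc : (x : ℂ) ^ (b - c) ≠ 0 := cpow_ne_zero_iff.2 (.inl hx')
  simp only [gammaRatio, hpow]
  rw [div_div_div_eq, ← mul_div_mul_right _ _ (mul_ne_zero hc hbc)]
  ring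

theorem gammaRatio_add_one_left {a b : ℂ} {x : ℝ} (hx : x ≠ 0) (hxa : (x : ℂ) + a ≠ 0) :
    gammaRatio (a + 1) b x = gammaRatio a b x * ((x + a) / x) := by
  have hx' : (x : ℂ) ≠ 0 := ofReal_ne_zero.mpr hx
  rw [gammaRatio, gammaRatio, ← add_assoc, Gamma_add_one _ hxa, add_sub_right_comm,
    cpow_add _ _ hx', cpow_one]
  ring

theorem tendsto_gammaRatio_one_of_one_lt_re {a : ℂ} (ha : 1 < a.re) :
    Tendsto (gammaRatio a 1) atTop (𝓝 1) := by
  set s := a - 1 with hs_def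
  have hs : 0 < s.re := by rw [hs_def, sub_re, one_re]; linarith
  have hGs : Gamma s ≠ 0 := Gamma_ne_zero_of_re_pos hs
  have h := (tendsto_const_nhds (x := Gamma s)).div (tendsto_cpow_mul_betaIntegral hs) hGs
  rw [div_self hGs] at h
  refine h.congr' ?_
  filter_upwards [eventually_gt_atTop 0] with x hx
  have hx' : (x : ℂ) ≠ 0 := ofReal_ne_zero.mpr hx.ne'
  have hx1 : 0 < ((x : ℂ) + 1).re := by simp only [add_re, ofReal_re, one_re]; linarith
  have hbeta := Gamma_mul_Gamma_eq_betaIntegral hs hx1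
  have hB : betaIntegral s (x + 1) ≠ 0 := fun h0 => by
    simp only [h0, mul_zero, mul_eq_zero, hGs, Gamma_ne_zero_of_re_pos hx1, or_self] at hbeta
  have hxs : (x : ℂ) ^ s ≠ 0 := cpow_ne_zero_iff.2 (.inl hx')
  rw [Pi.div_apply, gammaRatio, div_eq_div_iff (mul_ne_zero hxs hB)
    (mul_ne_zero (Gamma_ne_zero_of_re_pos hx1) hxs), show (x : ℂ) + a = s + (x + 1) by ring]
  linear_combination (x : ℂ) ^ s * hbeta

theorem tendsto_ofReal_add_div_ofReal (a : ℂ) :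
    Tendsto (fun x : ℝ => ((x : ℂ) + a) / x) atTop (𝓝 1) := by
  have h : Tendsto (fun x : ℝ => 1 + a * (x : ℂ)⁻¹) atTop (𝓝 (1 + a * 0)) :=
    (tendsto_inv₀_cobounded.comp (RCLike.tendsto_ofReal_atTop_cobounded ℂ)).const_mul a
      |>.const_add 1
  rw [mul_zero, add_zero] at h
  refine h.congr' ?_
  filter_upwards [eventually_ne_atTop 0] with x hx
  rw [add_div, div_self (ofReal_ne_zero.mpr hx), div_eq_mul_inv]

theorem tendsto_gammaRatio_of_tendsto_add_one {a b : ℂ}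
    (h : Tendsto (gammaRatio (a + 1) b) atTop (𝓝 1)) : Tendsto (gammaRatio a b) atTop (𝓝 1) := by
  have h' := h.div (tendsto_ofReal_add_div_ofReal a) one_ne_zero
  rw [div_one] at h'
  refine h'.congr' ?_
  filter_upwards [eventually_gt_atTop 0, eventually_gt_atTop (-a.re)] with x hx hxa
  have hxa' : (x : ℂ) + a ≠ 0 := ne_zero_of_re_pos (by simp only [add_re, ofReal_re]; linarith)
  rw [Pi.div_apply, gammaRatio_add_one_left hx.ne' hxa',
    mul_div_cancel_right₀ _ (div_ne_zero hxa' (ofReal_ne_zero.mpr hx.ne'))]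

theorem tendsto_gammaRatio_of_tendsto_add_nat {a b : ℂ} (n : ℕ)
    (h : Tendsto (gammaRatio (a + n) b) atTop (𝓝 1)) : Tendsto (gammaRatio a b) atTop (𝓝 1) := by
  induction n generalizing a with
  | zero => simpa using h
  | succ n ih =>
    rw [Nat.cast_succ, add_comm (n : ℂ), ← add_assoc] at h
    exact tendsto_gammaRatio_of_tendsto_add_one (ih h)

theorem tendsto_gammaRatio_one (a : ℂ) : Tendsto (gammaRatio a 1) atTop (𝓝 1) := by
  obtain ⟨n, hn⟩ := exists_nat_gt (1 - a.re)
  exact tendsto_gammaRatio_of_tendsto_add_nat n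
    (tendsto_gammaRatio_one_of_one_lt_re (by simp only [add_re, natCast_re]; linarith))

end Complex

/-- Asymptotics of the ratio of two Gamma functions: for fixed `a b : ℂ`,
`Γ(z+a)/Γ(z+b) ∼ z^(a-b)` as `z → ∞` along the positive real axis. -/
theorem stmt4 (a b : ℂ) :
    Tendsto (fun x : ℝ =>
        Complex.Gamma ((x : ℂ) + a) / (Complex.Gamma ((x : ℂ) + b) * (x : ℂ) ^ (a - b)))
      atTop (nhds 1) := by
  have h := (tendsto_gammaRatio_one a).div (tendsto_gammaRatio_one b) one_ne_zero
  rw [div_one] at h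
  refine h.congr' ?_
  filter_upwards [eventually_gt_atTop 0] with x hx
  have hx1 : 0 < ((x : ℂ) + 1).re := by simp only [add_re, ofReal_re, one_re]; linarith
  exact (gammaRatio_eq_div_gammaRatio hx.ne' (Gamma_ne_zero_of_re_pos hx1)).symm
end

section
/- The power series y(z) = Σ_{n≥0} (α/2)_n (β/2)_n / (n! ((γ+1)/2)_n) · z^{2n} converges for |z| < 1 and satisfies the differential equation y'' + (γ/z + δ/(z-1) + δ/(z+1)) y' + αβ/((z-1)(z+1)) y = 0 on the punctured disc {z : 0 < |z| < 1}, where δ = (α+β+1-γ)/2. -/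
/-!
The series is the Gauss hypergeometric function `₂F₁(α/2, β/2; (γ+1)/2; z²)`, whose radius of
convergence is at least `1` because `(γ+1)/2` is not a nonpositive integer. Its coefficients
satisfy `(n+1)(n+c) Cₙ₊₁ = (n+a)(n+b) Cₙ`, which says exactly that `F = ₂F₁(a, b; c; ·)` solves
`w(1-w)F'' + (c-(a+b+1)w)F' - abF = 0` on the unit disc. Substituting `w = z²`, so that
`y' = 2z F'(z²)` and `y'' = 2F'(z²) + 4z² F''(z²)`, turns this equation into the Heun equation.
-/

open Finset Nat

/-- The Taylor coefficients `(α/2)_n (β/2)_n / (n! ((γ+1)/2)_n)` of the local Heun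
function `Hl(-1,0;α,β,γ,δ;·)`. -/
noncomputable def heunCoeff (α β γ : ℂ) (n : ℕ) : ℂ :=
  (∏ i ∈ Finset.range n, (α / 2 + (i : ℂ))) * (∏ i ∈ Finset.range n, (β / 2 + (i : ℂ))) /
    ((n ! : ℂ) * ∏ i ∈ Finset.range n, ((γ + 1) / 2 + (i : ℂ)))

/-- The series `y(z) = Σ (α/2)_n (β/2)_n / (n! ((γ+1)/2)_n) z^{2n}`. -/
noncomputable def heunSeries (α β γ : ℂ) (z : ℂ) : ℂ :=
  ∑' n : ℕ, heunCoeff α β γ n * z ^ (2 * n)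

open Filter Topology FormalMultilinearSeries

section PowerSeries

variable {𝕜 : Type*} [NontriviallyNormedField 𝕜]

namespace FormalMultilinearSeries

def derivCoeffs (c : ℕ → 𝕜) (n : ℕ) : 𝕜 := (n + 1) * c (n + 1)

variable (c : ℕ → 𝕜)

lemma derivSeries_ofScalars_apply (n : ℕ) (z : 𝕜) :
    (ofScalars 𝕜 c).derivSeries n (fun _ => z) 1 = derivCoeffs c n * z ^ n := by
  rw [apply_eq_pow_smul_coeff, _root_.smul_apply, derivSeries_coeff_one, coeff_ofScalars,
    derivCoeffs, smul_eq_mul, nsmul_eq_mul]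
  push_cast
  ring

lemma radius_ofScalars_le_radius_ofScalars_derivCoeffs :
    (ofScalars 𝕜 c).radius ≤ (ofScalars 𝕜 (derivCoeffs c)).radius := by
  refine (radius_le_radius_derivSeries _).trans (radius_le_of_le fun n => ?_)
  calc ‖ofScalars 𝕜 (derivCoeffs c) n‖ = ‖(ofScalars 𝕜 c).derivSeries.coeff n 1‖ := by
        rw [ofScalars_norm, derivSeries_coeff_one, coeff_ofScalars, derivCoeffs, nsmul_eq_mul]
        norm_cast
    _ ≤ ‖(ofScalars 𝕜 c).derivSeries.coeff n‖ := by
        simpa using ((ofScalars 𝕜 c).derivSeries.coeff n).le_opNorm 1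
    _ = ‖(ofScalars 𝕜 c).derivSeries n‖ := norm_apply_eq_norm_coef.symm

variable [CompleteSpace 𝕜] {z : 𝕜}

lemma hasSum_ofScalarsSum (hz : ‖z‖ₑ < (ofScalars 𝕜 c).radius) :
    HasSum (fun n => c n * z ^ n) (ofScalarsSum c z) := by
  have hsum := (ofScalars 𝕜 c).hasSum (x := z) (by simpa using hz)
  simp only [ofScalars_apply_eq, smul_eq_mul] at hsum
  exact hsum

lemma hasDerivAt_ofScalarsSum (hz : ‖z‖ₑ < (ofScalars 𝕜 c).radius) :
    HasDerivAt (ofScalarsSum c) (ofScalarsSum (derivCoeffs c) z) z := by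
  have hsum := ((ofScalars 𝕜 c).derivSeries.hasSum
    (by simpa using hz.trans_le (radius_le_radius_derivSeries _))).mapL
      (ContinuousLinearMap.apply 𝕜 𝕜 1)
  refine ((ofScalars 𝕜 c).hasFDerivAt_sum hz).hasDerivAt.congr_deriv ?_
  simp only [ContinuousLinearMap.apply_apply, derivSeries_ofScalars_apply] at hsum
  rw [← hsum.tsum_eq, ofScalars_sum_eq]
  simp only [smul_eq_mul]

lemma deriv_ofScalarsSum (hz : ‖z‖ₑ < (ofScalars 𝕜 c).radius) :
    deriv (ofScalarsSum c) z = ofScalarsSum (derivCoeffs c) z :=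
  (hasDerivAt_ofScalarsSum c hz).deriv

lemma deriv_deriv_ofScalarsSum (hz : ‖z‖ₑ < (ofScalars 𝕜 c).radius) :
    deriv (deriv (ofScalarsSum c)) z = ofScalarsSum (derivCoeffs (derivCoeffs c)) z := by
  have hderiv : deriv (ofScalarsSum c) =ᶠ[𝓝 z] ofScalarsSum (derivCoeffs c) := by
    have hz' : z ∈ Metric.eball (0 : 𝕜) (ofScalars 𝕜 c).radius := by simpa using hz
    filter_upwards [Metric.isOpen_eball.mem_nhds hz'] with y hy
    exact deriv_ofScalarsSum c (by simpa using hy)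
  rw [hderiv.deriv_eq, deriv_ofScalarsSum _
    (hz.trans_le (radius_ofScalars_le_radius_ofScalars_derivCoeffs c))]

end FormalMultilinearSeries

theorem hasSum_natCast_mul_mul_pow {e : ℕ → 𝕜} {w s : 𝕜}
    (h : HasSum (fun n => derivCoeffs e n * w ^ n) s) :
    HasSum (fun n => n * e n * w ^ n) (w * s) := by
  rw [← hasSum_nat_add_iff' 1]
  simpa [derivCoeffs, pow_succ, mul_assoc, mul_comm, mul_left_comm] using h.mul_left w

end PowerSeries

section SquareArgument

variable {𝕜 : Type*} [NontriviallyNormedField 𝕜] {f : 𝕜 → 𝕜} {z : 𝕜}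

lemma deriv_comp_sq (hf : DifferentiableAt 𝕜 f (z ^ 2)) :
    deriv (fun x => f (x ^ 2)) z = 2 * z * deriv f (z ^ 2) := by
  have h : HasDerivAt (fun x => f (x ^ 2)) (deriv f (z ^ 2) * ((2 : ℕ) * z ^ (2 - 1))) z :=
    hf.hasDerivAt.comp z (hasDerivAt_pow 2 z)
  rw [h.deriv]
  norm_num
  ring

lemma deriv_deriv_comp_sq (hf : ∀ᶠ w in 𝓝 (z ^ 2), DifferentiableAt 𝕜 f w)
    (hf' : DifferentiableAt 𝕜 (deriv f) (z ^ 2)) :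
    deriv (deriv fun x => f (x ^ 2)) z =
      2 * deriv f (z ^ 2) + 4 * z ^ 2 * deriv (deriv f) (z ^ 2) := by
  have hderiv : (deriv fun x => f (x ^ 2)) =ᶠ[𝓝 z] fun x => 2 * x * deriv f (x ^ 2) := by
    filter_upwards [((continuous_pow 2).tendsto z).eventually hf] with x hx
    exact deriv_comp_sq hx
  have h : HasDerivAt (fun x => 2 * x * deriv f (x ^ 2))
      (2 * 1 * deriv f (z ^ 2) + 2 * z * (deriv (deriv f) (z ^ 2) * ((2 : ℕ) * z ^ (2 - 1)))) z :=
    ((hasDerivAt_id' z).const_mul 2).mul (hf'.hasDerivAt.comp z (hasDerivAt_pow 2 z))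
  rw [hderiv.deriv_eq, h.deriv]
  norm_num
  ring

end SquareArgument

lemma ascPochhammer_eval_eq_prod_range {R : Type*} [CommSemiring R] (n : ℕ) (r : R) :
    (ascPochhammer R n).eval r = ∏ i ∈ range n, (r + i) := by
  induction n with
  | zero => simp
  | succ n ih => rw [ascPochhammer_succ_eval, ih, prod_range_succ]

section Hypergeometric

variable {𝕂 : Type*} [RCLike 𝕂] {a b c : 𝕂}

lemma ordinaryHypergeometricCoefficient_succ (hc : ∀ k : ℕ, c ≠ -k) (n : ℕ) :
    (n + 1) * (c + n) * ordinaryHypergeometricCoefficient a b c (n + 1) =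
      (a + n) * (b + n) * ordinaryHypergeometricCoefficient a b c n := by
  have hcn : c + n ≠ 0 := fun h => hc n (eq_neg_of_add_eq_zero_left h)
  have hpoch : (ascPochhammer 𝕂 n).eval c ≠ 0 := by
    rw [ascPochhammer_eval_eq_prod_range]
    exact prod_ne_zero_iff.2 fun i _ h => hc i (eq_neg_of_add_eq_zero_left h)
  simp only [ordinaryHypergeometricCoefficient, ascPochhammer_succ_eval, factorial_succ]
  push_cast
  field_simp

lemma one_le_radius_ordinaryHypergeometricSeries (hc : ∀ k : ℕ, c ≠ -k) :
    1 ≤ (ordinaryHypergeometricSeries 𝕂 a b c).radius := by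
  by_cases ha : ∃ k : ℕ, a = -k
  · obtain ⟨k, rfl⟩ := ha
    simp [ordinaryHypergeometric_radius_top_of_neg_nat₁]
  by_cases hb : ∃ k : ℕ, b = -k
  · obtain ⟨k, rfl⟩ := hb
    simp [ordinaryHypergeometric_radius_top_of_neg_nat₂]
  push Not at ha hb
  refine (ordinaryHypergeometricSeries_radius_eq_one 𝕂 a b c fun k => ?_).ge
  refine ⟨fun h => ha k ?_, fun h => hb k ?_, fun h => hc k ?_⟩ <;> simp [h]

lemma enorm_lt_radius_ordinaryHypergeometricSeries (hc : ∀ k : ℕ, c ≠ -k) {w : 𝕂}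
    (hw : ‖w‖ < 1) : ‖w‖ₑ < (ordinaryHypergeometricSeries 𝕂 a b c).radius := by
  refine lt_of_lt_of_le ?_ (one_le_radius_ordinaryHypergeometricSeries hc)
  rw [← ofReal_norm]
  exact ENNReal.ofReal_lt_one.2 hw

lemma analyticOnNhd_ordinaryHypergeometric (hc : ∀ k : ℕ, c ≠ -k) :
    AnalyticOnNhd 𝕂 (₂F₁ a b c) (Metric.ball (0 : 𝕂) 1) := by
  refine ((ordinaryHypergeometricSeries 𝕂 a b c).hasFPowerSeriesOnBall
    (zero_lt_one.trans_le (one_le_radius_ordinaryHypergeometricSeries hc))).analyticOnNhd.mono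
    fun w hw => ?_
  simpa using enorm_lt_radius_ordinaryHypergeometricSeries hc (mem_ball_zero_iff.1 hw)

theorem ordinaryHypergeometric_ode (hc : ∀ k : ℕ, c ≠ -k) {w : 𝕂} (hw : ‖w‖ < 1) :
    w * (1 - w) * deriv (deriv (₂F₁ a b c)) w + (c - (a + b + 1) * w) * deriv (₂F₁ a b c) w
      - a * b * ₂F₁ a b c w = 0 := by
  set C := ordinaryHypergeometricCoefficient a b c
  have hR : ‖w‖ₑ < (ofScalars 𝕂 C).radius := enorm_lt_radius_ordinaryHypergeometricSeries hc hw
  have hR' := hR.trans_le (radius_ofScalars_le_radius_ofScalars_derivCoeffs C)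
  have hR'' := hR'.trans_le (radius_ofScalars_le_radius_ofScalars_derivCoeffs _)
  change w * (1 - w) * deriv (deriv (ofScalarsSum C)) w
    + (c - (a + b + 1) * w) * deriv (ofScalarsSum C) w - a * b * ofScalarsSum C w = 0
  rw [deriv_deriv_ofScalarsSum C hR, deriv_ofScalarsSum C hR]
  have h0 := hasSum_ofScalarsSum C hR
  have h1 := hasSum_ofScalarsSum _ hR'
  have hA := hasSum_natCast_mul_mul_pow (hasSum_ofScalarsSum _ hR'')
  have hB := hasSum_natCast_mul_mul_pow h1
  have hA' := hasSum_natCast_mul_mul_pow (e := fun n => (n - 1) * C n)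
    (hA.congr_fun fun n => by simp only [derivCoeffs]; push_cast; ring)
  -- `Σ (n+c)(n+1)Cₙ₊₁ wⁿ` is `wF'' + cF'`, and by the recurrence also `w²F'' + (a+b+1)wF' + abF`.
  have hlow : HasSum (fun n => (n + c) * derivCoeffs C n * w ^ n)
      (w * ofScalarsSum (derivCoeffs (derivCoeffs C)) w + c * ofScalarsSum (derivCoeffs C) w) :=
    (hA.add (h1.mul_left c)).congr_fun fun n => by ring
  have hhigh : HasSum (fun n => (n + c) * derivCoeffs C n * w ^ n)
      (w * (w * ofScalarsSum (derivCoeffs (derivCoeffs C)) w)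
        + (a + b + 1) * (w * ofScalarsSum (derivCoeffs C) w) + a * b * ofScalarsSum C w) :=
    ((hA'.add (hB.mul_left (a + b + 1))).add (h0.mul_left (a * b))).congr_fun fun n => by
      simp only [derivCoeffs]
      linear_combination w ^ n * ordinaryHypergeometricCoefficient_succ (a := a) (b := b) hc n
  linear_combination hlow.unique hhigh

end Hypergeometric

lemma heunCoeff_eq_ordinaryHypergeometricCoefficient (α β γ : ℂ) (n : ℕ) :
    heunCoeff α β γ n = ordinaryHypergeometricCoefficient (α / 2) (β / 2) ((γ + 1) / 2) n := by
  simp only [heunCoeff, ordinaryHypergeometricCoefficient, ascPochhammer_eval_eq_prod_range]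
  rw [div_eq_mul_inv, mul_inv]
  ring

lemma heunSeries_eq_ordinaryHypergeometric (α β γ : ℂ) :
    heunSeries α β γ = fun z => ₂F₁ (α / 2) (β / 2) ((γ + 1) / 2) (z ^ 2) := by
  ext z
  rw [heunSeries, ordinaryHypergeometric, ordinaryHypergeometric_sum_eq]
  refine tsum_congr fun n => ?_
  rw [heunCoeff_eq_ordinaryHypergeometricCoefficient, pow_mul, smul_eq_mul]

/-- The power series `Σ (α/2)_n (β/2)_n / (n! ((γ+1)/2)_n) z^{2n}` converges for `|z| < 1`
and satisfies the Heun equation with `a = -1`, `q = 0`, `δ = (α+β+1-γ)/2` on the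
punctured unit disc. -/
theorem stmt6 (α β γ δ : ℂ) (hγ : ∀ m : ℕ, γ ≠ -(m : ℂ))
    (hδ : δ = (α + β + 1 - γ) / 2) :
    (∀ z : ℂ, ‖z‖ < 1 → Summable (fun n : ℕ => heunCoeff α β γ n * z ^ (2 * n))) ∧
    (∀ z : ℂ, 0 < ‖z‖ → ‖z‖ < 1 →
      deriv (deriv (heunSeries α β γ)) z
        + (γ / z + δ / (z - 1) + δ / (z + 1)) * deriv (heunSeries α β γ) z
        + α * β / ((z - 1) * (z + 1)) * heunSeries α β γ z = 0) := by
  have hc : ∀ k : ℕ, (γ + 1) / 2 ≠ -k := fun k h =>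
    hγ (2 * k + 1) (by push_cast; linear_combination 2 * h)
  have hsq : ∀ z : ℂ, ‖z‖ < 1 → ‖z ^ 2‖ < 1 := fun z hz => by
    rw [norm_pow]
    exact pow_lt_one₀ (norm_nonneg z) hz two_ne_zero
  refine ⟨fun z hz => ?_, fun z hz0 hz1 => ?_⟩
  · refine (hasSum_ofScalarsSum _ (enorm_lt_radius_ordinaryHypergeometricSeries
      (a := α / 2) (b := β / 2) hc (hsq z hz))).summable.congr fun n => ?_
    rw [heunCoeff_eq_ordinaryHypergeometricCoefficient, pow_mul]
  · have hw : z ^ 2 ∈ Metric.ball (0 : ℂ) 1 := mem_ball_zero_iff.2 (hsq z hz1)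
    have hF := analyticOnNhd_ordinaryHypergeometric (a := α / 2) (b := β / 2) hc
    have hode := ordinaryHypergeometric_ode (a := α / 2) (b := β / 2) hc (hsq z hz1)
    have hF_near : ∀ᶠ w in 𝓝 (z ^ 2), DifferentiableAt ℂ (₂F₁ (α / 2) (β / 2) ((γ + 1) / 2)) w :=
      eventually_of_mem (Metric.isOpen_ball.mem_nhds hw) fun w hw' => (hF w hw').differentiableAt
    rw [heunSeries_eq_ordinaryHypergeometric, deriv_comp_sq (hF _ hw).differentiableAt,
      deriv_deriv_comp_sq hF_near (hF.deriv _ hw).differentiableAt]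
    have hz : z ≠ 0 := norm_pos_iff.1 hz0
    have hz₁ : z - 1 ≠ 0 := sub_ne_zero.2 fun h => by simp [h] at hz1
    have hz₂ : z + 1 ≠ 0 := fun h => by simp [eq_neg_of_add_eq_zero_left h] at hz1
    field_simp
    rw [hδ]
    linear_combination -4 * hode
end

section
/- If Re(γ + 1 - α - β) > 0 and γ is not a nonpositive integer, then Σ_{n=0}^∞ (α/2)_n (β/2)_n / (n! ((γ+1)/2)_n) = Γ((γ+1-α-β)/2) Γ((γ+1)/2) / (Γ((γ+1-α)/2) Γ((γ+1-β)/2)). -/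
/-!
Gauss's argument. For the terms `t_n(c)` of `F(c) = ₂F₁(a, b; c; 1)` one has
`c (c - a - b) t_n(c) - (c - a)(c - b) t_n(c + 1) = c (n t_n(c) - (n + 1) t_{n+1}(c))`, which
telescopes to `c (c - a - b) F(c) = (c - a)(c - b) F(c + 1)`. Iterating, `F(c)` is a ratio of
rising products times `F(c + m)`. As `m → ∞`, `F(c + m) → 1` by dominated convergence, and the ratio
of rising products tends to `Γ(c - a - b) Γ(c) / (Γ(c - a) Γ(c - b))` by Euler's limit formula
`(s)_{m+1} ≈ m^s m! / Γ(s)`. The same formula shows `t_{m+1} = O(m^{Re(a + b - c) - 1})`, so the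
series converges and `n t_n → 0`.
-/

open Finset Nat Filter Topology Asymptotics

namespace Complex

/-- Also valid at the poles of `Γ`: there the product vanishes, and so does `GammaSeq s m`
because of the division by zero in its definition. -/
lemma prod_range_succ_add_eq_cpow_mul_factorial_mul_GammaSeq_inv (s : ℂ) {m : ℕ} (hm : m ≠ 0) :
    ∏ j ∈ range (m + 1), (s + j) = (m : ℂ) ^ s * m ! * (GammaSeq s m)⁻¹ := by
  have hpow : (m : ℂ) ^ s ≠ 0 := by simp [hm]
  have hfac : (m ! : ℂ) ≠ 0 := mod_cast m.factorial_ne_zero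
  rw [GammaSeq, inv_div]
  by_cases hP : ∏ j ∈ range (m + 1), (s + j) = 0
  · simp [hP]
  · field_simp

lemma GammaSeq_neg_nat_eq_zero (k : ℕ) {m : ℕ} (hkm : k ≤ m) : GammaSeq (-k) m = 0 := by
  rw [GammaSeq, prod_eq_zero (i := k) (by simpa [Nat.lt_succ_iff]) (by ring), div_zero]

/-- At the poles `Gamma s = 0` in Mathlib, so `(Gamma s)⁻¹` is the true value of `1 / Γ(s)`. -/
lemma tendsto_GammaSeq_inv (s : ℂ) :
    Tendsto (fun m ↦ (GammaSeq s m)⁻¹) atTop (𝓝 (Gamma s)⁻¹) := by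
  by_cases hs : ∃ k : ℕ, s = -k
  · obtain ⟨k, rfl⟩ := hs
    rw [Gamma_neg_nat_eq_zero, inv_zero]
    refine tendsto_const_nhds.congr' ?_
    filter_upwards [eventually_ge_atTop k] with m hm
    rw [GammaSeq_neg_nat_eq_zero k hm, inv_zero]
  · push Not at hs
    exact (GammaSeq_tendsto_Gamma s).inv₀ (Gamma_ne_zero hs)

lemma tendsto_prod_div_prod_Gamma {s t u v : ℂ} (h : s + t = u + v) :
    Tendsto (fun m : ℕ ↦ (∏ j ∈ range (m + 1), ((s + j) * (t + j)))
        / ∏ j ∈ range (m + 1), ((u + j) * (v + j))) atTop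
      (𝓝 (Gamma u * Gamma v / (Gamma s * Gamma t))) := by
  have hlim := ((tendsto_GammaSeq_inv s).mul (tendsto_GammaSeq_inv t)).mul
    ((GammaSeq_tendsto_Gamma u).mul (GammaSeq_tendsto_Gamma v))
  rw [← mul_inv, ← div_eq_inv_mul] at hlim
  refine hlim.congr' ?_
  filter_upwards [eventually_ne_atTop 0] with m hm
  have hm' : (m : ℂ) ≠ 0 := mod_cast hm
  have hfac : (m ! : ℂ) ≠ 0 := mod_cast m.factorial_ne_zero
  have hs : (m : ℂ) ^ s ≠ 0 := by simp [hm]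
  have ht : (m : ℂ) ^ t ≠ 0 := by simp [hm]
  have hexp : (m : ℂ) ^ u * (m : ℂ) ^ v = (m : ℂ) ^ s * (m : ℂ) ^ t := by
    rw [← cpow_add _ _ hm', ← cpow_add _ _ hm', h]
  simp only [prod_mul_distrib, prod_range_succ_add_eq_cpow_mul_factorial_mul_GammaSeq_inv _ hm]
  rw [show (m : ℂ) ^ u * m ! * (GammaSeq u m)⁻¹ * ((m : ℂ) ^ v * m ! * (GammaSeq v m)⁻¹)
      = (m : ℂ) ^ s * (m : ℂ) ^ t * m ! ^ 2 * ((GammaSeq u m)⁻¹ * (GammaSeq v m)⁻¹) by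
    rw [← hexp]; ring]
  field_simp

lemma isBigO_natCast_cpow (z : ℂ) :
    (fun m : ℕ ↦ (m : ℂ) ^ z) =O[atTop] fun m ↦ (m : ℝ) ^ z.re := by
  refine IsBigO.of_bound 1 ?_
  filter_upwards [eventually_gt_atTop 0] with m hm
  rw [norm_natCast_cpow_of_pos hm, Real.norm_of_nonneg (by positivity), one_mul]

lemma tendsto_natCast_cpow_atTop_zero {z : ℂ} (hz : z.re < 0) :
    Tendsto (fun m : ℕ ↦ (m : ℂ) ^ z) atTop (𝓝 0) := by
  refine (isBigO_natCast_cpow z).trans_tendsto ?_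
  simpa [Function.comp_def] using
    (tendsto_rpow_neg_atTop (neg_pos.2 hz)).comp tendsto_natCast_atTop_atTop

lemma norm_le_norm_add_ofReal {z : ℂ} (hz : 0 ≤ z.re) {t : ℝ} (ht : 0 ≤ t) : ‖z‖ ≤ ‖z + t‖ := by
  rw [← sq_le_sq₀ (norm_nonneg _) (norm_nonneg _), Complex.sq_norm, Complex.sq_norm,
    normSq_apply, normSq_apply]
  simp only [add_re, ofReal_re, add_im, ofReal_im, add_zero]
  nlinarith

end Complex

lemma tsum_sub_succ_of_tendsto {G : Type*} [AddCommGroup G] [TopologicalSpace G]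
    [IsTopologicalAddGroup G] [T2Space G] {f : ℕ → G} {l : G}
    (hs : Summable fun n ↦ f n - f (n + 1)) (hf : Tendsto f atTop (𝓝 l)) :
    ∑' n, (f n - f (n + 1)) = f 0 - l := by
  refine tendsto_nhds_unique hs.hasSum.tendsto_sum_nat ?_
  simp_rw [sum_range_sub']
  exact tendsto_const_nhds.sub hf

open Complex

/-- `(a)ₙ (b)ₙ / (n! (c)ₙ)`, the `n`-th term of `₂F₁(a, b; c; 1)`. -/
noncomputable def gaussTerm (a b c : ℂ) (n : ℕ) : ℂ :=
  (∏ i ∈ range n, (a + (i : ℂ))) * (∏ i ∈ range n, (b + (i : ℂ))) /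
    ((n ! : ℂ) * ∏ i ∈ range n, (c + (i : ℂ)))

section Terms

variable (a b c : ℂ)

@[simp]
lemma gaussTerm_zero : gaussTerm a b c 0 = 1 := by simp [gaussTerm]

lemma gaussTerm_succ (n : ℕ) :
    gaussTerm a b c (n + 1) = gaussTerm a b c n * ((a + n) * (b + n) / ((n + 1) * (c + n))) := by
  simp only [gaussTerm, prod_range_succ, factorial_succ]
  push_cast
  rw [_root_.div_mul_div_comm]
  congr 1 <;> ring

lemma natCast_add_one_mul_gaussTerm_succ {m : ℕ} (hm : m ≠ 0) :
    ((m : ℂ) + 1) * gaussTerm a b c (m + 1)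
      = (m : ℂ) ^ (a + b - c) * ((GammaSeq a m)⁻¹ * (GammaSeq b m)⁻¹ * GammaSeq c m) := by
  have hm' : (m : ℂ) ≠ 0 := mod_cast hm
  have hfac : (m ! : ℂ) ≠ 0 := mod_cast m.factorial_ne_zero
  have hpow : (m : ℂ) ^ c ≠ 0 := by simp [hm]
  simp only [gaussTerm, prod_range_succ_add_eq_cpow_mul_factorial_mul_GammaSeq_inv _ hm,
    factorial_succ, cpow_sub _ _ hm', cpow_add _ _ hm']
  push_cast
  field_simp

lemma isBigO_gaussTerm_succ :
    (fun m : ℕ ↦ gaussTerm a b c (m + 1)) =O[atTop] fun m ↦ (m : ℝ) ^ ((a + b - c).re - 1) := by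
  have hGamma : (fun m ↦ (GammaSeq a m)⁻¹ * (GammaSeq b m)⁻¹ * GammaSeq c m) =O[atTop]
      fun _ ↦ (1 : ℝ) :=
    (((tendsto_GammaSeq_inv a).mul (tendsto_GammaSeq_inv b)).mul
      (GammaSeq_tendsto_Gamma c)).isBigO_one ℝ
  have hinv : (fun m : ℕ ↦ ((m : ℂ) + 1)⁻¹) =O[atTop] fun m ↦ (m : ℝ) ^ (-1 : ℝ) := by
    refine IsBigO.of_bound 1 ?_
    filter_upwards [eventually_gt_atTop 0] with m hm
    have hm' : (0 : ℝ) < m := mod_cast hm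
    rw [norm_inv, Real.rpow_neg_one, Real.norm_of_nonneg (by positivity), one_mul,
      show (m : ℂ) + 1 = ((m + 1 : ℕ) : ℂ) by push_cast; ring, norm_natCast]
    gcongr
    linarith
  refine (((isBigO_natCast_cpow (a + b - c)).mul hinv).mul hGamma).congr' ?_ ?_
  · filter_upwards [eventually_ne_atTop 0] with m hm
    rw [mul_right_comm, mul_comm, ← natCast_add_one_mul_gaussTerm_succ a b c hm,
      inv_mul_cancel_left₀]
    exact_mod_cast m.succ_ne_zero
  · filter_upwards [eventually_gt_atTop 0] with m hm
    rw [mul_one, ← Real.rpow_add (by exact_mod_cast hm), ← sub_eq_add_neg]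

lemma summable_gaussTerm (h : 0 < (c - a - b).re) : Summable (gaussTerm a b c) := by
  rw [← summable_nat_add_iff 1]
  refine summable_of_isBigO_nat (Real.summable_nat_rpow.2 ?_) (isBigO_gaussTerm_succ a b c)
  simp only [sub_re, add_re] at h ⊢
  linarith

lemma tendsto_natCast_mul_gaussTerm (h : 0 < (c - a - b).re) :
    Tendsto (fun n : ℕ ↦ (n : ℂ) * gaussTerm a b c n) atTop (𝓝 0) := by
  rw [← tendsto_add_atTop_iff_nat 1]
  have hlim := (tendsto_natCast_cpow_atTop_zero (z := a + b - c) (by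
    simp only [sub_re, add_re] at h ⊢; linarith)).mul
    (((tendsto_GammaSeq_inv a).mul (tendsto_GammaSeq_inv b)).mul (GammaSeq_tendsto_Gamma c))
  rw [zero_mul] at hlim
  refine hlim.congr' ?_
  filter_upwards [eventually_ne_atTop 0] with m hm
  push_cast
  exact (natCast_add_one_mul_gaussTerm_succ a b c hm).symm

end Terms

section Contiguous

variable {a b c : ℂ}

lemma mul_gaussTerm_eq_mul_gaussTerm_add_one (hc : ∀ j : ℕ, c + j ≠ 0) (n : ℕ) :
    c * gaussTerm a b c n = (c + n) * gaussTerm a b (c + 1) n := by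
  have hshift :
      c * ∏ i ∈ range n, (c + 1 + (i : ℂ)) = (∏ i ∈ range n, (c + (i : ℂ))) * (c + n) := by
    rw [← prod_range_succ (fun i : ℕ ↦ c + (i : ℂ)), prod_range_succ']
    push_cast
    rw [add_zero, mul_comm]
    exact congrArg (· * c) (prod_congr rfl fun i _ ↦ by ring)
  have hfac : (n ! : ℂ) ≠ 0 := mod_cast n.factorial_ne_zero
  have hP : ∏ i ∈ range n, (c + (i : ℂ)) ≠ 0 := prod_ne_zero_iff.2 fun i _ ↦ hc i
  have hP₁ : ∏ i ∈ range n, (c + 1 + (i : ℂ)) ≠ 0 := prod_ne_zero_iff.2 fun i _ ↦ by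
    simpa [add_assoc, add_comm (1 : ℂ)] using hc (i + 1)
  simp only [gaussTerm]
  field_simp
  linear_combination (∏ i ∈ range n, (a + (i : ℂ))) * (∏ i ∈ range n, (b + (i : ℂ))) * hshift

lemma gaussTerm_contiguous (hc : ∀ j : ℕ, c + j ≠ 0) (n : ℕ) :
    c * (c - a - b) * gaussTerm a b c n - (c - a) * (c - b) * gaussTerm a b (c + 1) n
      = c * (n * gaussTerm a b c n) - c * ((n + 1 : ℕ) * gaussTerm a b c (n + 1)) := by
  have hshift := mul_gaussTerm_eq_mul_gaussTerm_add_one (a := a) (b := b) hc n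
  have hsucc : c * (((n + 1 : ℕ) : ℂ) * gaussTerm a b c (n + 1))
      = (a + n) * (b + n) * gaussTerm a b (c + 1) n := by
    have hn : (n : ℂ) + 1 ≠ 0 := mod_cast n.succ_ne_zero
    have hcn := hc n
    rw [gaussTerm_succ]
    push_cast
    field_simp
    linear_combination (a + n) * (b + n) * hshift
  linear_combination (c - a - b - n) * hshift + hsucc

lemma tsum_gaussTerm_contiguous (hc : ∀ j : ℕ, c + j ≠ 0) (h : 0 < (c - a - b).re) :
    c * (c - a - b) * ∑' n, gaussTerm a b c n
      = (c - a) * (c - b) * ∑' n, gaussTerm a b (c + 1) n := by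
  have h' : 0 < (c + 1 - a - b).re := by
    simp only [sub_re, add_re, one_re] at h ⊢; linarith
  have hs₁ := (summable_gaussTerm a b c h).mul_left (c * (c - a - b))
  have hs₂ := (summable_gaussTerm a b (c + 1) h').mul_left ((c - a) * (c - b))
  have hs := hs₁.sub hs₂
  rw [← sub_eq_zero, ← tsum_mul_left, ← tsum_mul_left, ← hs₁.tsum_sub hs₂]
  simp_rw [gaussTerm_contiguous hc] at hs ⊢
  have hlim := (tendsto_natCast_mul_gaussTerm a b c h).const_mul c
  rw [mul_zero] at hlim
  simpa using tsum_sub_succ_of_tendsto hs hlim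

lemma tsum_gaussTerm_mul_prod (hc : ∀ j : ℕ, c + j ≠ 0) (h : 0 < (c - a - b).re) (m : ℕ) :
    (∑' n, gaussTerm a b c n) * ∏ j ∈ range m, ((c - a - b + j) * (c + j))
      = (∏ j ∈ range m, ((c - a + j) * (c - b + j))) * ∑' n, gaussTerm a b (c + m) n := by
  induction m with
  | zero => simp
  | succ m ih =>
    have hcm : ∀ j : ℕ, c + m + j ≠ 0 := fun j ↦ by
      simpa [add_assoc] using hc (m + j)
    have hm : 0 < (c + m - a - b).re := by
      simp only [sub_re, add_re, natCast_re] at h ⊢; linarith [m.cast_nonneg (α := ℝ)]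
    rw [prod_range_succ, prod_range_succ, Nat.cast_succ, ← add_assoc]
    linear_combination (c - a - b + m) * (c + m) * ih
      + (∏ j ∈ range m, ((c - a + j) * (c - b + j))) * tsum_gaussTerm_contiguous hcm hm

end Contiguous

section Limit

variable (a b : ℂ)

lemma norm_gaussTerm_add_ofReal_le {c : ℂ} (hc : 0 < c.re) {t : ℝ} (ht : 0 ≤ t) (n : ℕ) :
    ‖gaussTerm a b (c + t) n‖ ≤ ‖gaussTerm a b c n‖ := by
  have hpos : ∀ i : ℕ, 0 < ‖c + i‖ := fun i ↦ norm_pos_iff.2 fun h0 ↦ by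
    have := congrArg re h0
    simp only [add_re, natCast_re, zero_re] at this
    linarith [i.cast_nonneg (α := ℝ)]
  simp only [gaussTerm, norm_div, norm_mul, norm_prod]
  gcongr with i
  · exact mul_pos (by simp [n.factorial_pos]) (prod_pos fun i _ ↦ hpos i)
  · rw [add_right_comm]
    exact norm_le_norm_add_ofReal (by simp only [add_re, natCast_re]; positivity) ht

lemma tendsto_gaussTerm_add_natCast (c : ℂ) (n : ℕ) :
    Tendsto (fun m : ℕ ↦ gaussTerm a b (c + m) n) atTop (𝓝 (if n = 0 then 1 else 0)) := by
  induction n with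
  | zero => simp
  | succ n ih =>
    have hinv : Tendsto (fun m : ℕ ↦ (c + n + m)⁻¹) atTop (𝓝 0) :=
      tendsto_inv₀_cobounded.comp
        ((tendsto_const_add_cobounded (c + n)).comp tendsto_natCast_atTop_cobounded)
    have hfactor := hinv.const_mul ((a + n) * (b + n) / (n + 1))
    rw [mul_zero] at hfactor
    simpa [gaussTerm_succ, div_mul_eq_mul_div, add_right_comm c] using
      (ih.mul hfactor).congr fun m ↦ by field_simp

lemma tendsto_tsum_gaussTerm_add_natCast (c : ℂ) :
    Tendsto (fun m : ℕ ↦ ∑' n, gaussTerm a b (c + m) n) atTop (𝓝 1) := by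
  obtain ⟨M, hM⟩ := exists_nat_gt (max (-c.re) (a + b - c).re)
  rw [max_lt_iff] at hM
  have hre : 0 < (c + M).re := by simp only [add_re, natCast_re]; linarith
  have hre' : 0 < (c + M - a - b).re := by
    simp only [sub_re, add_re, natCast_re] at hM ⊢; linarith
  have hbound : ∀ᶠ m : ℕ in atTop, ∀ n, ‖gaussTerm a b (c + m) n‖ ≤ ‖gaussTerm a b (c + M) n‖ := by
    filter_upwards [eventually_ge_atTop M] with m hm n
    simpa [add_assoc, Nat.cast_sub hm] using
      norm_gaussTerm_add_ofReal_le a b hre (Nat.cast_nonneg (m - M)) n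
  simpa using tendsto_tsum_of_dominated_convergence
    (summable_gaussTerm a b (c + M) hre').norm (tendsto_gaussTerm_add_natCast a b c) hbound

end Limit

theorem tsum_gaussTerm {a b c : ℂ} (hc : ∀ j : ℕ, c + j ≠ 0) (h : 0 < (c - a - b).re) :
    ∑' n, gaussTerm a b c n = Gamma (c - a - b) * Gamma c / (Gamma (c - a) * Gamma (c - b)) := by
  have hD : ∀ m, ∏ j ∈ range m, ((c - a - b + j) * (c + j)) ≠ 0 := fun m ↦
    prod_ne_zero_iff.2 fun j _ ↦ mul_ne_zero (fun h0 ↦ by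
      have := congrArg re h0
      simp only [add_re, natCast_re, zero_re] at this
      linarith [j.cast_nonneg (α := ℝ)]) (hc j)
  have hlim := (tendsto_prod_div_prod_Gamma (s := c - a) (t := c - b) (u := c - a - b) (v := c)
    (by ring)).mul ((tendsto_tsum_gaussTerm_add_natCast a b c).comp (tendsto_add_atTop_nat 1))
  rw [mul_one] at hlim
  refine tendsto_nhds_unique (tendsto_const_nhds.congr fun m ↦ ?_) hlim
  rw [Function.comp_apply, div_mul_eq_mul_div, eq_div_iff (hD _)]
  exact tsum_gaussTerm_mul_prod hc h (m + 1)

/-- Gauss's summation theorem with parameters `α/2`, `β/2`, `(γ+1)/2`: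
if `Re(γ+1-α-β) > 0` and `γ` is not a nonpositive integer then
`Σ (α/2)_n (β/2)_n / (n! ((γ+1)/2)_n) = Γ((γ+1-α-β)/2)Γ((γ+1)/2)/(Γ((γ+1-α)/2)Γ((γ+1-β)/2))`. -/
theorem stmt8 (α β γ : ℂ) (hγ : ∀ m : ℕ, γ ≠ -(m : ℂ))
    (h : 0 < (γ + 1 - α - β).re) :
    ∑' n : ℕ,
        (∏ i ∈ Finset.range n, (α / 2 + (i : ℂ))) * (∏ i ∈ Finset.range n, (β / 2 + (i : ℂ))) /
          ((n ! : ℂ) * ∏ i ∈ Finset.range n, ((γ + 1) / 2 + (i : ℂ)))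
      = Complex.Gamma ((γ + 1 - α - β) / 2) * Complex.Gamma ((γ + 1) / 2) /
          (Complex.Gamma ((γ + 1 - α) / 2) * Complex.Gamma ((γ + 1 - β) / 2)) := by
  have hc : ∀ j : ℕ, (γ + 1) / 2 + j ≠ 0 := fun j hj ↦
    hγ (2 * j + 1) (by push_cast; linear_combination 2 * hj)
  have hre : 0 < ((γ + 1) / 2 - α / 2 - β / 2).re := by
    rw [show (γ + 1) / 2 - α / 2 - β / 2 = (γ + 1 - α - β) / 2 by ring, div_ofNat_re]
    positivity
  refine (tsum_gaussTerm hc hre).trans ?_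
  congr 3 <;> ring
end

section
/- With d_{2n} = (α/2)_n (β/2)_n / (n! ((γ+1)/2)_n), the limit as n → ∞ of Γ(2n+1)/Γ(2n-1+δ) · d_{2n} exists and equals 2^(2-δ) Γ((γ+1)/2) / (Γ(α/2) Γ(β/2)), where δ = (α+β+1-γ)/2, assuming α/2, β/2, (γ+1)/2 are not nonpositive integers. -/
open Complex Filter Finset Nat Topology

-- helper: (x + n)/n → 1
lemma hratio (x : ℂ) : Tendsto (fun n : ℕ => (x + n) / n) atTop (𝓝 1) := by
  have h1 : Tendsto (fun n : ℕ => ((n : ℂ))⁻¹) atTop (𝓝 0) := by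
    have h := tendsto_inv_atTop_zero.comp (tendsto_natCast_atTop_atTop (R := ℝ))
    have := (Complex.continuous_ofReal.tendsto 0).comp h
    refine this.congr fun n => ?_
    simp
  have h2 : Tendsto (fun n : ℕ => x * ((n : ℂ))⁻¹ + 1) atTop (𝓝 1) := by
    have := (h1.const_mul x).add (tendsto_const_nhds (x := (1 : ℂ)))
    simpa using this
  refine h2.congr' ?_
  filter_upwards [eventually_ge_atTop 1] with n hn
  have hn0 : (n : ℂ) ≠ 0 := Nat.cast_ne_zero.mpr (by omega)
  field_simp

lemma ev_ne (z : ℂ) : ∀ᶠ m : ℕ in atTop, (m : ℂ) + z ≠ 0 := by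
  obtain ⟨k, hk⟩ := exists_nat_gt (-z.re)
  filter_upwards [eventually_ge_atTop k] with m hm h0
  have h1 : (m : ℝ) + z.re = 0 := by simpa using congrArg Complex.re h0
  have h2 : (k : ℝ) ≤ m := by exact_mod_cast hm
  linarith

lemma Gamma_add_nat' (s : ℂ) (h : ∀ m : ℕ, s ≠ -(m : ℂ)) (n : ℕ) :
    Complex.Gamma (s + n) = Complex.Gamma s * ∏ j ∈ Finset.range n, (s + j) := by
  induction n with
  | zero => simp
  | succ n ih =>
    have hne : s + n ≠ 0 := by
      intro h0
      exact h n (by linear_combination h0)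
    have : s + (n + 1 : ℕ) = (s + n) + 1 := by push_cast; ring
    rw [this, Complex.Gamma_add_one _ hne, ih, Finset.prod_range_succ]
    ring

-- f_z m = m! * m^z / Γ(m+1+z)
lemma auxA_base (z : ℂ) (h : ∀ m : ℕ, z + 1 ≠ -(m : ℂ)) :
    Tendsto (fun m : ℕ => (m ! : ℂ) * (m : ℂ) ^ z / Complex.Gamma ((m : ℂ) + 1 + z))
      atTop (𝓝 1) := by
  have hΓ : Complex.Gamma (z + 1) ≠ 0 := Complex.Gamma_ne_zero h
  have hlim : Tendsto
      (fun m : ℕ => Complex.GammaSeq (z + 1) m * ((z + 1 + m) / m) / Complex.Gamma (z + 1))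
      atTop (𝓝 1) := by
    have := ((Complex.GammaSeq_tendsto_Gamma (z + 1)).mul (hratio (z + 1))).div_const
      (Complex.Gamma (z + 1))
    simpa [mul_one, div_self hΓ] using this
  refine hlim.congr' ?_
  filter_upwards [eventually_ge_atTop 1] with m hm
  have hm0 : (m : ℂ) ≠ 0 := Nat.cast_ne_zero.mpr (by omega)
  have hfac : (m ! : ℂ) ≠ 0 := Nat.cast_ne_zero.mpr m.factorial_ne_zero
  have hprod : (∏ j ∈ Finset.range m, (z + 1 + j)) ≠ 0 := by
    refine Finset.prod_ne_zero_iff.mpr fun j _ h0 => h j ?_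
    linear_combination h0
  have hlast : z + 1 + m ≠ 0 := fun h0 => h m (by linear_combination h0)
  have hG : Complex.Gamma ((m : ℂ) + 1 + z)
      = Complex.Gamma (z + 1) * ∏ j ∈ Finset.range m, (z + 1 + j) := by
    rw [show (m : ℂ) + 1 + z = (z + 1) + m by ring]
    exact Gamma_add_nat' _ h m
  rw [Complex.GammaSeq, hG, Finset.prod_range_succ]
  have hpow : (m : ℂ) ^ (z + 1) = (m : ℂ) ^ z * m := by
    rw [Complex.cpow_add _ _ hm0, Complex.cpow_one]
  rw [hpow]
  field_simp

lemma auxA_step (z : ℂ)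
    (h : Tendsto (fun m : ℕ => (m ! : ℂ) * (m : ℂ) ^ (z + 1) / Complex.Gamma ((m : ℂ) + 1 + (z + 1)))
      atTop (𝓝 1)) :
    Tendsto (fun m : ℕ => (m ! : ℂ) * (m : ℂ) ^ z / Complex.Gamma ((m : ℂ) + 1 + z))
      atTop (𝓝 1) := by
  have hlim : Tendsto
      (fun m : ℕ => ((m ! : ℂ) * (m : ℂ) ^ (z + 1) / Complex.Gamma ((m : ℂ) + 1 + (z + 1)))
        * ((1 + z + m) / m)) atTop (𝓝 1) := by
    simpa using h.mul (hratio (1 + z))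
  refine hlim.congr' ?_
  filter_upwards [eventually_ge_atTop 1, ev_ne (1 + z)] with m hm hne
  have hm0 : (m : ℂ) ≠ 0 := Nat.cast_ne_zero.mpr (by omega)
  have hne' : (m : ℂ) + 1 + z ≠ 0 := by
    intro h0; exact hne (by linear_combination h0)
  have hG : Complex.Gamma ((m : ℂ) + 1 + (z + 1)) = ((m : ℂ) + 1 + z) * Complex.Gamma ((m : ℂ) + 1 + z) := by
    rw [show (m : ℂ) + 1 + (z + 1) = ((m : ℂ) + 1 + z) + 1 by ring]
    exact Complex.Gamma_add_one _ hne'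
  have hpow : (m : ℂ) ^ (z + 1) = (m : ℂ) ^ z * m := by
    rw [Complex.cpow_add _ _ hm0, Complex.cpow_one]
  rw [hG, hpow]
  by_cases hΓ : Complex.Gamma ((m : ℂ) + 1 + z) = 0
  · simp [hΓ]
  · field_simp
    ring

lemma auxA_down (k : ℕ) : ∀ z : ℂ,
    Tendsto (fun m : ℕ => (m ! : ℂ) * (m : ℂ) ^ (z + k) / Complex.Gamma ((m : ℂ) + 1 + (z + k)))
      atTop (𝓝 1) →
    Tendsto (fun m : ℕ => (m ! : ℂ) * (m : ℂ) ^ z / Complex.Gamma ((m : ℂ) + 1 + z))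
      atTop (𝓝 1) := by
  induction k with
  | zero => intro z h; simpa using h
  | succ k ih =>
    intro z h
    refine auxA_step z (ih (z + 1) ?_)
    have : z + 1 + k = z + (k + 1 : ℕ) := by push_cast; ring
    rw [this]
    exact h

lemma auxA (z : ℂ) :
    Tendsto (fun m : ℕ => (m ! : ℂ) * (m : ℂ) ^ z / Complex.Gamma ((m : ℂ) + 1 + z))
      atTop (𝓝 1) := by
  obtain ⟨k, hk⟩ := exists_nat_gt (-1 - z.re)
  refine auxA_down k z (auxA_base (z + k) ?_)
  intro m h0
  have := congrArg Complex.re h0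
  simp [Complex.add_re] at this
  linarith [this]

lemma auxB (δ : ℂ) :
    Tendsto (fun n : ℕ => Complex.Gamma (2 * (n : ℂ) + 1) / Complex.Gamma (2 * (n : ℂ) - 1 + δ)
      * (n : ℂ) ^ (δ - 2)) atTop (𝓝 ((2 : ℂ) ^ ((2 : ℂ) - δ))) := by
  have h2n : Tendsto (fun n : ℕ => 2 * n) atTop atTop :=
    tendsto_atTop_atTop.mpr fun b => ⟨b, fun a ha => le_trans ha (by omega)⟩
  have h := (auxA (δ - 2)).comp h2n
  have h2 : ((2 : ℂ)) ^ (δ - 2) ≠ 0 := by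
    intro h0
    exact two_ne_zero (Complex.cpow_eq_zero_iff _ _ |>.mp h0).1
  have hlim : Tendsto (fun n : ℕ =>
      (((2 * n)! : ℂ) * ((2 * n : ℕ) : ℂ) ^ (δ - 2) / Complex.Gamma (((2 * n : ℕ) : ℂ) + 1 + (δ - 2)))
      * ((2 : ℂ) ^ (δ - 2))⁻¹) atTop (𝓝 (((2 : ℂ) ^ (δ - 2))⁻¹)) := by
    simpa using h.mul (tendsto_const_nhds (x := ((2 : ℂ) ^ (δ - 2))⁻¹))
  have hval : ((2 : ℂ) ^ (δ - 2))⁻¹ = (2 : ℂ) ^ ((2 : ℂ) - δ) := by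
    rw [← Complex.cpow_neg, neg_sub]
  rw [← hval]
  refine hlim.congr' ?_
  filter_upwards [eventually_ge_atTop 1] with n hn
  have hn0 : (n : ℂ) ≠ 0 := Nat.cast_ne_zero.mpr (by omega)
  have hGf : Complex.Gamma (2 * (n : ℂ) + 1) = ((2 * n)! : ℂ) := by
    rw [show 2 * (n : ℂ) + 1 = ((2 * n : ℕ) : ℂ) + 1 by push_cast; ring]
    exact Complex.Gamma_nat_eq_factorial (2 * n)
  have harg : ((2 * n : ℕ) : ℂ) + 1 + (δ - 2) = 2 * (n : ℂ) - 1 + δ := by push_cast; ring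
  have hsplit : ((2 * n : ℕ) : ℂ) ^ (δ - 2) = (2 : ℂ) ^ (δ - 2) * (n : ℂ) ^ (δ - 2) := by
    rw [Nat.cast_mul, Complex.natCast_mul_natCast_cpow]
    norm_num
  rw [hGf, harg, hsplit]
  have h2' : (2 : ℂ) ^ (δ - 2) * ((2 : ℂ) ^ (δ - 2))⁻¹ = 1 := mul_inv_cancel₀ h2
  linear_combination (((2 * n)! : ℂ) * (n : ℂ) ^ (δ - 2) / Complex.Gamma (2 * (n : ℂ) - 1 + δ)) * h2'

lemma auxQ (x : ℂ) (h : ∀ m : ℕ, x ≠ -(m : ℂ)) :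
    Tendsto (fun n : ℕ => (∏ i ∈ Finset.range n, (x + (i : ℂ))) / ((n ! : ℂ) * (n : ℂ) ^ (x - 1)))
      atTop (𝓝 (Complex.Gamma x)⁻¹) := by
  have hΓ : Complex.Gamma x ≠ 0 := Complex.Gamma_ne_zero h
  have hlim : Tendsto (fun n : ℕ => ((x + n) / n * Complex.GammaSeq x n)⁻¹)
      atTop (𝓝 (Complex.Gamma x)⁻¹) := by
    refine Tendsto.inv₀ ?_ (by simpa using hΓ)
    simpa using (hratio x).mul (Complex.GammaSeq_tendsto_Gamma x)
  refine hlim.congr' ?_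
  filter_upwards [eventually_ge_atTop 1] with n hn
  have hn0 : (n : ℂ) ≠ 0 := Nat.cast_ne_zero.mpr (by omega)
  have hfac : (n ! : ℂ) ≠ 0 := Nat.cast_ne_zero.mpr n.factorial_ne_zero
  have hpow : (n : ℂ) ^ x = (n : ℂ) ^ (x - 1) * n := by
    have h' := Complex.cpow_add (x := (n : ℂ)) (x - 1) 1 hn0
    rw [Complex.cpow_one] at h'
    simpa using h'
  have hpne : (n : ℂ) ^ (x - 1) ≠ 0 := by
    intro h0; exact hn0 (Complex.cpow_eq_zero_iff _ _ |>.mp h0).1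
  have hlast : x + (n : ℂ) ≠ 0 := fun h0 => h n (by linear_combination h0)
  rw [Complex.GammaSeq, Finset.prod_range_succ, hpow]
  have hprod : (∏ j ∈ Finset.range n, (x + (j : ℂ))) ≠ 0 := by
    refine Finset.prod_ne_zero_iff.mpr fun j _ h0 => h j (by linear_combination h0)
  field_simp
lemma alg (R pd Pa Pb Pc f pa pb pc : ℂ) (hf : f ≠ 0) (hpa : pa ≠ 0) (hpb : pb ≠ 0)
    (hpc : pc ≠ 0) (hPc : Pc ≠ 0) (hkey : pa * pb = pd * pc) :
    R * (Pa * Pb / (f * Pc)) = R * pd * (Pa / (f * pa) * (Pb / (f * pb)) / (Pc / (f * pc))) := by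
  rw [_root_.div_mul_div_comm, _root_.div_div_div_eq, _root_.mul_div_assoc', _root_.mul_div_assoc',
    _root_.div_eq_div_iff (mul_ne_zero hf hPc)
      (mul_ne_zero (mul_ne_zero (mul_ne_zero hf hpa) (mul_ne_zero hf hpb)) hPc)]
  linear_combination (R * Pa * Pb * f ^ 2 * Pc) * hkey


/-- With `d_{2n} = (α/2)_n (β/2)_n / (n! ((γ+1)/2)_n)` and `δ = (α+β+1-γ)/2`,
`Γ(2n+1)/Γ(2n-1+δ) · d_{2n} → 2^(2-δ) Γ((γ+1)/2)/(Γ(α/2)Γ(β/2))` provided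
`α/2`, `β/2`, `(γ+1)/2` are not nonpositive integers. -/
theorem stmt10 (α β γ δ : ℂ) (hδ : δ = (α + β + 1 - γ) / 2)
    (hα : ∀ m : ℕ, α / 2 ≠ -(m : ℂ)) (hβ : ∀ m : ℕ, β / 2 ≠ -(m : ℂ))
    (hγ : ∀ m : ℕ, (γ + 1) / 2 ≠ -(m : ℂ)) :
    Tendsto (fun n : ℕ =>
        Complex.Gamma (2 * (n : ℂ) + 1) / Complex.Gamma (2 * (n : ℂ) - 1 + δ) *
          ((∏ i ∈ Finset.range n, (α / 2 + (i : ℂ))) *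
              (∏ i ∈ Finset.range n, (β / 2 + (i : ℂ))) /
            ((n ! : ℂ) * ∏ i ∈ Finset.range n, ((γ + 1) / 2 + (i : ℂ)))))
      atTop
      (nhds ((2 : ℂ) ^ ((2 : ℂ) - δ) * Complex.Gamma ((γ + 1) / 2) /
        (Complex.Gamma (α / 2) * Complex.Gamma (β / 2)))) := by
  set a := α / 2
  set b := β / 2
  set c := (γ + 1) / 2
  have hΓa : Complex.Gamma a ≠ 0 := Complex.Gamma_ne_zero hα
  have hΓb : Complex.Gamma b ≠ 0 := Complex.Gamma_ne_zero hβ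
  have hΓc : Complex.Gamma c ≠ 0 := Complex.Gamma_ne_zero hγ
  have hlim := (auxB δ).mul (((auxQ a hα).mul (auxQ b hβ)).div (auxQ c hγ)
    (inv_ne_zero hΓc))
  have hval : (2 : ℂ) ^ ((2 : ℂ) - δ) *
      ((Complex.Gamma a)⁻¹ * (Complex.Gamma b)⁻¹ / (Complex.Gamma c)⁻¹)
      = (2 : ℂ) ^ ((2 : ℂ) - δ) * Complex.Gamma c / (Complex.Gamma a * Complex.Gamma b) := by
    field_simp
  rw [hval] at hlim
  refine hlim.congr' ?_
  filter_upwards [eventually_ge_atTop 1] with n hn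
  have hn0 : (n : ℂ) ≠ 0 := Nat.cast_ne_zero.mpr (by omega)
  have hfac : (n ! : ℂ) ≠ 0 := Nat.cast_ne_zero.mpr (Nat.factorial_ne_zero n)
  have hpa : (n : ℂ) ^ (a - 1) ≠ 0 := fun h0 => hn0 (Complex.cpow_eq_zero_iff _ _ |>.mp h0).1
  have hpb : (n : ℂ) ^ (b - 1) ≠ 0 := fun h0 => hn0 (Complex.cpow_eq_zero_iff _ _ |>.mp h0).1
  have hpc : (n : ℂ) ^ (c - 1) ≠ 0 := fun h0 => hn0 (Complex.cpow_eq_zero_iff _ _ |>.mp h0).1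
  have hpd : (n : ℂ) ^ (δ - 2) ≠ 0 := fun h0 => hn0 (Complex.cpow_eq_zero_iff _ _ |>.mp h0).1
  have hPc : (∏ i ∈ Finset.range n, (c + (i : ℂ))) ≠ 0 :=
    Finset.prod_ne_zero_iff.mpr fun j _ h0 => hγ j (by linear_combination h0)
  have hkey : (n : ℂ) ^ (a - 1) * (n : ℂ) ^ (b - 1) = (n : ℂ) ^ (δ - 2) * (n : ℂ) ^ (c - 1) := by
    rw [← Complex.cpow_add _ _ hn0, ← Complex.cpow_add _ _ hn0]
    congr 1
    subst hδ
    simp only [a, b, c]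
    ring
  simp only [Pi.div_apply]
  exact (alg _ _ _ _ _ _ _ _ _ hfac hpa hpb hpc hPc hkey).symm
end

section
/- Let y_{01}(z) = Σ_n (α/2)_n (β/2)_n/(n!((γ+1)/2)_n) z^{2n} on |z|<1, and let δ = (α+β+1-γ)/2 with Re(δ) < 1 and γ, δ, α-β ∉ ℤ. Suppose y_{01} = c⁺₁₁ y_{+1} + c⁺₁₂ y_{+2} near z = 1, where y_{+1} is analytic at 1 with y_{+1}(1) = 1 and y_{+2}(z) = (1-z)^(1-δ) g(z) with g analytic at 1, g(1) = 1, both solving the Heun equation with a = -1, q = 0. Then c⁺₁₁ = Γ((γ+1-α-β)/2)Γ((γ+1)/2)/(Γ((γ+1-α)/2)Γ((γ+1-β)/2)). -/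
/-!
Approaching `z = 1` from the left along the real axis, `y₊₁ → 1` and `y₊₂ → 0` (since
`Re(1 - δ) > 0`), so `c⁺₁₁` is the limit of `y₀₁(z) = ₂F₁(a, b; c; z²)`, `a = α/2`, `b = β/2`,
`c = (γ+1)/2`. Because `Re(c - a - b) = Re(1 - δ) > 0` the coefficients of this series are
`O(n^(Re(a+b-c)-1))` by Euler's limit formula for `Γ`, hence absolutely summable, and the limit is
the value at `1` by dominated convergence. That value is Gauss's sum
`Γ(c)Γ(c-a-b)/(Γ(c-a)Γ(c-b))`: the contiguous relation
`F(c) = (c-a)(c-b)/(c(c-a-b)) F(c+1)` holds because its termwise difference telescopes to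
`-lim n·coeff n = 0`; iterating it `M` times gives a ratio of Pochhammer symbols, which tends to
the Gamma quotient by Euler's formula again, times `F(c+M)`, which tends to `1`.
-/

open Finset Nat

/-- The Heun differential operator for the subclass `a = -1`, `q = 0`:
`y ↦ y'' + (γ/z + δ/(z-1) + δ/(z+1)) y' + αβ/((z-1)(z+1)) y`. -/
noncomputable def heunOpSub (α β γ δ : ℂ) (y : ℂ → ℂ) (z : ℂ) : ℂ :=
  deriv (deriv y) z + (γ / z + δ / (z - 1) + δ / (z + 1)) * deriv y z +
    α * β / ((z - 1) * (z + 1)) * y z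

open Filter Topology Asymptotics Complex

/-- At a pole `-m` both sides are `0`: `GammaSeq (-m) n = 0` for `n ≥ m` (a division by zero)
and `Gamma (-m) = 0` by convention. -/
theorem Complex.GammaSeq_inv_tendsto_Gamma_inv (s : ℂ) :
    Tendsto (fun n => (GammaSeq s n)⁻¹) atTop (𝓝 (Gamma s)⁻¹) := by
  by_cases hs : Gamma s = 0
  · obtain ⟨m, rfl⟩ := (Gamma_eq_zero_iff s).1 hs
    rw [hs, inv_zero]
    refine tendsto_const_nhds.congr' ?_
    filter_upwards [eventually_ge_atTop m] with n hn
    have : ∏ j ∈ range (n + 1), (-(m : ℂ) + j) = 0 :=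
      prod_eq_zero (mem_range.2 (Nat.lt_succ_of_le hn)) (by ring)
    simp [GammaSeq, this]
  · exact (GammaSeq_tendsto_Gamma s).inv₀ hs

theorem Complex.add_natCast_ne_zero_of_re_pos {z : ℂ} (hz : 0 < z.re) (j : ℕ) : z + j ≠ 0 :=
  ne_zero_of_re_pos (by simp; positivity)

theorem Complex.norm_ofReal_add_natCast {x : ℝ} (hx : 0 ≤ x) (i : ℕ) : ‖(x : ℂ) + i‖ = x + i := by
  rw [← ofReal_natCast, ← ofReal_add, norm_real, Real.norm_of_nonneg (by positivity)]

namespace Hypergeometric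

noncomputable def poch (z : ℂ) (n : ℕ) : ℂ := ∏ i ∈ range n, (z + i)

/-- The coefficient of `zⁿ` in `₂F₁(a, b; c; z)`. -/
noncomputable def coeff (a b c : ℂ) (n : ℕ) : ℂ := poch a n * poch b n / (n ! * poch c n)

lemma poch_succ (z : ℂ) (n : ℕ) : poch z (n + 1) = poch z n * (z + n) := prod_range_succ _ _

lemma poch_succ' (z : ℂ) (n : ℕ) : poch z (n + 1) = z * poch (z + 1) n := by
  rw [poch, prod_range_succ']
  simp only [poch, Nat.cast_add, Nat.cast_one, Nat.cast_zero, add_zero, add_assoc, add_comm (1 : ℂ)]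
  ring

lemma poch_ne_zero {z : ℂ} (hz : ∀ j : ℕ, z + j ≠ 0) (n : ℕ) : poch z n ≠ 0 :=
  prod_ne_zero_iff.2 fun i _ => hz i

lemma GammaSeq_eq (z : ℂ) (n : ℕ) : GammaSeq z n = n ^ z * n ! / poch z (n + 1) := rfl

lemma GammaSeq_inv_eq (z : ℂ) (n : ℕ) : (GammaSeq z n)⁻¹ = poch z (n + 1) / (n ^ z * n !) :=
  inv_div _ _

lemma poch_succ_eq (z : ℂ) {n : ℕ} (hn : n ≠ 0) :
    poch z (n + 1) = n ^ z * n ! * (GammaSeq z n)⁻¹ := by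
  have : (n : ℂ) ^ z * n ! ≠ 0 :=
    mul_ne_zero (by simp [hn]) (by exact_mod_cast n.factorial_ne_zero)
  rw [GammaSeq_inv_eq, mul_div_cancel₀ _ this]

lemma poch_succ_inv_eq (z : ℂ) {n : ℕ} (hn : n ≠ 0) :
    (poch z (n + 1))⁻¹ = GammaSeq z n / (n ^ z * n !) := by
  rw [poch_succ_eq z hn, mul_inv, inv_inv, div_eq_inv_mul, mul_comm]

lemma coeff_zero (a b c : ℂ) : coeff a b c 0 = 1 := by simp [coeff, poch]

lemma natCast_add_one_mul_coeff_succ (a b : ℂ) {c : ℂ} (hc : ∀ j : ℕ, c + j ≠ 0) {n : ℕ}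
    (hn : n ≠ 0) :
    ((n : ℂ) + 1) * coeff a b c (n + 1) =
      n ^ (a + b - c) * ((GammaSeq a n)⁻¹ * (GammaSeq b n)⁻¹ * GammaSeq c n) := by
  have hn' : (n : ℂ) ≠ 0 := by exact_mod_cast hn
  have hfac : ((n + 1)! : ℂ) = (n + 1) * n ! := by push_cast [Nat.factorial_succ]; ring
  rw [GammaSeq_inv_eq, GammaSeq_inv_eq, GammaSeq_eq, cpow_sub _ _ hn', cpow_add _ _ hn', coeff,
    hfac]
  have : (n : ℂ) ^ a ≠ 0 := by simp [hn]
  have : (n : ℂ) ^ b ≠ 0 := by simp [hn]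
  have : (n : ℂ) ^ c ≠ 0 := by simp [hn]
  have : (n ! : ℂ) ≠ 0 := by exact_mod_cast n.factorial_ne_zero
  have := poch_ne_zero hc (n + 1)
  have : (n : ℂ) + 1 ≠ 0 := by exact_mod_cast n.succ_ne_zero
  field_simp

lemma isBigO_natCast_add_one_mul_coeff_succ (a b : ℂ) {c : ℂ} (hc : ∀ j : ℕ, c + j ≠ 0) :
    (fun n : ℕ => ((n : ℂ) + 1) * coeff a b c (n + 1)) =O[atTop]
      fun n => (n : ℝ) ^ (a + b - c).re := by
  have hGamma : (fun n => (GammaSeq a n)⁻¹ * (GammaSeq b n)⁻¹ * GammaSeq c n) =O[atTop]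
      fun _ => (1 : ℝ) :=
    (((GammaSeq_inv_tendsto_Gamma_inv a).mul (GammaSeq_inv_tendsto_Gamma_inv b)).mul
      (GammaSeq_tendsto_Gamma c)).isBigO_one ℝ
  have hpow : (fun n : ℕ => (n : ℂ) ^ (a + b - c)) =O[atTop] fun n => (n : ℝ) ^ (a + b - c).re :=
    IsBigO.of_bound 1 <| by
      filter_upwards [eventually_ge_atTop 1] with n hn
      rw [norm_natCast_cpow_of_pos hn, Real.norm_of_nonneg (by positivity), one_mul]
  refine ((hpow.mul hGamma).congr' ?_ (by simp)).trans (isBigO_refl _ _)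
  filter_upwards [eventually_ne_atTop 0] with n hn
  exact (natCast_add_one_mul_coeff_succ a b hc hn).symm

lemma tendsto_natCast_mul_coeff (a b : ℂ) {c : ℂ} (hc : ∀ j : ℕ, c + j ≠ 0)
    (hcab : 0 < (c - a - b).re) :
    Tendsto (fun n : ℕ => (n : ℂ) * coeff a b c n) atTop (𝓝 0) := by
  refine (tendsto_add_atTop_iff_nat 1).1 ?_
  push_cast
  refine (isBigO_natCast_add_one_mul_coeff_succ a b hc).trans_tendsto ?_
  rw [show (a + b - c).re = -(c - a - b).re by simp; ring]
  exact (tendsto_rpow_neg_atTop hcab).comp tendsto_natCast_atTop_atTop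

lemma summable_norm_coeff (a b : ℂ) {c : ℂ} (hc : ∀ j : ℕ, c + j ≠ 0)
    (hcab : 0 < (c - a - b).re) : Summable fun n => ‖coeff a b c n‖ := by
  refine (summable_nat_add_iff 1).1 <| summable_of_isBigO_nat (g := fun n => (n : ℝ) ^
    ((a + b - c).re - 1)) (Real.summable_nat_rpow.2 (by simp at hcab ⊢; linarith)) ?_
  have hinv : (fun n : ℕ => ((n : ℂ) + 1)⁻¹) =O[atTop] fun n => (n : ℝ)⁻¹ :=
    IsBigO.of_bound 1 <| by
      filter_upwards [eventually_ge_atTop 1] with n hn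
      have hn' : (0 : ℝ) < n := by exact_mod_cast hn
      rw [one_mul, norm_inv, norm_inv, Real.norm_of_nonneg hn'.le,
        show (n : ℂ) + 1 = ((n + 1 : ℕ) : ℂ) by push_cast; rfl, Complex.norm_natCast]
      push_cast
      gcongr
      linarith
  refine ((hinv.mul (isBigO_natCast_add_one_mul_coeff_succ a b hc)).congr' ?_ ?_).norm_left
  · filter_upwards with n
    rw [← mul_assoc, inv_mul_cancel₀ (by exact_mod_cast n.succ_ne_zero), one_mul]
  · filter_upwards [eventually_ne_atTop 0] with n hn
    rw [Real.rpow_sub_one (by exact_mod_cast hn), div_eq_inv_mul]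

lemma coeff_succ (a b : ℂ) {c : ℂ} (hc : ∀ j : ℕ, c + j ≠ 0) (n : ℕ) :
    coeff a b c (n + 1) = coeff a b c n * ((a + n) * (b + n)) / ((n + 1) * (c + n)) := by
  have : (n ! : ℂ) ≠ 0 := by exact_mod_cast n.factorial_ne_zero
  have : (n : ℂ) + 1 ≠ 0 := by exact_mod_cast n.succ_ne_zero
  have := poch_ne_zero hc n
  have := hc n
  have hfac : ((n + 1)! : ℂ) = (n + 1) * n ! := by push_cast [Nat.factorial_succ]; ring
  simp only [coeff, poch_succ, hfac]
  field_simp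

lemma coeff_c_add_one (a b : ℂ) {c : ℂ} (hc : ∀ j : ℕ, c + j ≠ 0) (n : ℕ) :
    coeff a b (c + 1) n = coeff a b c n * c / (c + n) := by
  have : (n ! : ℂ) ≠ 0 := by exact_mod_cast n.factorial_ne_zero
  have := poch_ne_zero hc n
  have := hc n
  have hc0 : c ≠ 0 := by simpa using hc 0
  have hpoch : poch (c + 1) n = poch c n * (c + n) / c := by
    rw [eq_div_iff hc0, ← poch_succ, poch_succ', mul_comm]
  simp only [coeff, hpoch]
  field_simp

lemma coeff_sub_mul_coeff_c_add_one (a b : ℂ) {c : ℂ} (hc : ∀ j : ℕ, c + j ≠ 0)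
    (hcab : c - a - b ≠ 0) (n : ℕ) :
    coeff a b c n - (c - a) * (c - b) / (c * (c - a - b)) * coeff a b (c + 1) n
      = (n * coeff a b c n - (n + 1) * coeff a b c (n + 1)) / (c - a - b) := by
  have : (n : ℂ) + 1 ≠ 0 := by exact_mod_cast n.succ_ne_zero
  have := hc n
  have hc0 : c ≠ 0 := by simpa using hc 0
  rw [coeff_c_add_one a b hc, coeff_succ a b hc]
  field_simp
  ring

lemma tsum_coeff_eq_mul_tsum_coeff_c_add_one (a b : ℂ) {c : ℂ} (hc : ∀ j : ℕ, c + j ≠ 0)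
    (hcab : 0 < (c - a - b).re) :
    ∑' n, coeff a b c n =
      (c - a) * (c - b) / (c * (c - a - b)) * ∑' n, coeff a b (c + 1) n := by
  have hc1 : ∀ j : ℕ, c + 1 + j ≠ 0 := fun j => by
    simpa [add_assoc, add_comm (1 : ℂ)] using hc (j + 1)
  have hcab1 : 0 < (c + 1 - a - b).re := by simp at hcab ⊢; linarith
  set μ := (c - a) * (c - b) / (c * (c - a - b))
  have hsum : HasSum (fun n => coeff a b c n - μ * coeff a b (c + 1) n)
      (∑' n, coeff a b c n - μ * ∑' n, coeff a b (c + 1) n) :=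
    (summable_norm_coeff a b hc hcab).of_norm.hasSum.sub
      ((summable_norm_coeff a b hc1 hcab1).of_norm.hasSum.mul_left μ)
  set f : ℕ → ℂ := fun n => n * coeff a b c n / (c - a - b)
  have htele : ∀ N, ∑ n ∈ range N, (coeff a b c n - μ * coeff a b (c + 1) n) = f 0 - f N := by
    intro N
    rw [← sum_range_sub']
    refine sum_congr rfl fun n _ => ?_
    rw [coeff_sub_mul_coeff_c_add_one a b hc (ne_zero_of_re_pos hcab), sub_div]
    simp only [f, Nat.cast_add, Nat.cast_one]
  have hpartial : Tendsto (fun N => ∑ n ∈ range N, (coeff a b c n - μ * coeff a b (c + 1) n))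
      atTop (𝓝 0) := by
    simp_rw [htele]
    simpa [f] using ((tendsto_natCast_mul_coeff a b hc hcab).div_const (c - a - b)).const_sub 0
  linear_combination tendsto_nhds_unique hsum.tendsto_sum_nat hpartial

lemma tsum_coeff_eq_poch_ratio_mul (a b : ℂ) {c : ℂ} (hc : ∀ j : ℕ, c + j ≠ 0)
    (hcab : 0 < (c - a - b).re) (M : ℕ) :
    ∑' n, coeff a b c n = poch (c - a) M * poch (c - b) M / (poch c M * poch (c - a - b) M) *
      ∑' n, coeff a b (c + M) n := by
  induction M with
  | zero => simp [poch]
  | succ M ih =>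
    have hcM : ∀ j : ℕ, c + M + j ≠ 0 := fun j => by simpa [add_assoc] using hc (M + j)
    have hcabM : 0 < (c + M - a - b).re := by
      simp at hcab ⊢; linarith [(Nat.cast_nonneg M : (0 : ℝ) ≤ M)]
    rw [ih, tsum_coeff_eq_mul_tsum_coeff_c_add_one a b hcM hcabM, ← mul_assoc, Nat.cast_succ,
      ← add_assoc]
    congr 1
    have := hc M
    have := poch_ne_zero hc M
    have := poch_ne_zero (add_natCast_ne_zero_of_re_pos hcab) M
    have := add_natCast_ne_zero_of_re_pos hcab M
    rw [poch_succ, poch_succ, poch_succ, poch_succ, show c + M - a - b = c - a - b + M by ring]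
    field_simp
    ring

lemma poch_ratio_succ_eq (a b c : ℂ) {n : ℕ} (hn : n ≠ 0) :
    poch (c - a) (n + 1) * poch (c - b) (n + 1) / (poch c (n + 1) * poch (c - a - b) (n + 1)) =
      GammaSeq c n * GammaSeq (c - a - b) n * ((GammaSeq (c - a) n)⁻¹ * (GammaSeq (c - b) n)⁻¹) := by
  have hn' : (n : ℂ) ≠ 0 := by exact_mod_cast hn
  have hpow : (n : ℂ) ^ (c - a) * (n : ℂ) ^ (c - b) = (n : ℂ) ^ c * (n : ℂ) ^ (c - a - b) := by
    rw [← cpow_add _ _ hn', ← cpow_add _ _ hn']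
    ring_nf
  have : (n : ℂ) ^ c ≠ 0 := by simp [hn]
  have : (n : ℂ) ^ (c - a - b) ≠ 0 := by simp [hn]
  have : (n ! : ℂ) ≠ 0 := by exact_mod_cast n.factorial_ne_zero
  rw [div_eq_mul_inv, mul_inv, poch_succ_eq _ hn, poch_succ_eq _ hn, poch_succ_inv_eq _ hn,
    poch_succ_inv_eq _ hn]
  field_simp
  linear_combination GammaSeq c n * GammaSeq (c - a - b) n * (GammaSeq (c - a) n)⁻¹ *
    (GammaSeq (c - b) n)⁻¹ * hpow

lemma tendsto_poch_ratio (a b c : ℂ) :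
    Tendsto (fun M => poch (c - a) M * poch (c - b) M / (poch c M * poch (c - a - b) M)) atTop
      (𝓝 (Gamma c * Gamma (c - a - b) / (Gamma (c - a) * Gamma (c - b)))) := by
  have hGamma := ((GammaSeq_tendsto_Gamma c).mul (GammaSeq_tendsto_Gamma (c - a - b))).mul
    ((GammaSeq_inv_tendsto_Gamma_inv (c - a)).mul (GammaSeq_inv_tendsto_Gamma_inv (c - b)))
  rw [← mul_inv, ← div_eq_mul_inv] at hGamma
  refine (tendsto_add_atTop_iff_nat 1).1 <| hGamma.congr' ?_
  filter_upwards [eventually_ne_atTop 0] with n hn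
  exact (poch_ratio_succ_eq a b c hn).symm

lemma norm_coeff_le {a b c a' b' c' : ℂ} (ha : ∀ i : ℕ, ‖a + i‖ ≤ ‖a' + i‖)
    (hb : ∀ i : ℕ, ‖b + i‖ ≤ ‖b' + i‖) (hc : ∀ i : ℕ, ‖c' + i‖ ≤ ‖c + i‖)
    (hc' : ∀ i : ℕ, c' + i ≠ 0) (n : ℕ) : ‖coeff a b c n‖ ≤ ‖coeff a' b' c' n‖ := by
  simp only [coeff, poch, norm_div, norm_mul, norm_prod, norm_natCast]
  have : 0 < ∏ i ∈ range n, ‖c' + i‖ := prod_pos fun i _ => norm_pos_iff.2 (hc' i)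
  gcongr with i _ i _ i _
  exacts [ha i, hb i, hc i]

lemma tendsto_coeff_c_add_natCast (a b c : ℂ) {n : ℕ} (hn : n ≠ 0) :
    Tendsto (fun M : ℕ => coeff a b (c + M) n) atTop (𝓝 0) := by
  have hinv : ∀ i ∈ range n, Tendsto (fun M : ℕ => (c + M + i)⁻¹) atTop (𝓝 0) := fun i _ => by
    have := (tendsto_add_const_cobounded (c + i)).comp (tendsto_natCast_atTop_cobounded (α := ℂ))
    refine (tendsto_inv₀_cobounded.comp this).congr fun M => ?_
    simp only [Function.comp_apply]
    ring_nf
  have := (tendsto_finsetProd _ hinv).const_mul (poch a n * poch b n / n !)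
  rw [prod_const, card_range, zero_pow hn, mul_zero] at this
  refine this.congr fun M => ?_
  simp only [coeff, poch, div_eq_mul_inv, mul_inv, prod_inv_distrib]
  ring

lemma tendsto_tsum_coeff_c_add_natCast (a b c : ℂ) :
    Tendsto (fun M : ℕ => ∑' n, coeff a b (c + M) n) atTop (𝓝 1) := by
  set K : ℝ := ‖a‖ + ‖b‖ + 2
  have hK : ∀ i : ℕ, (K : ℂ) + i ≠ 0 := add_natCast_ne_zero_of_re_pos (by simp [K]; positivity)
  have hmajorant := summable_norm_coeff ‖a‖ ‖b‖ hK (by simp [K]; linarith)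
  have hnorm_le : ∀ {z : ℂ} (i : ℕ), ‖z + i‖ ≤ ‖(‖z‖ : ℂ) + i‖ := fun i => by
    rw [norm_ofReal_add_natCast (norm_nonneg _)]
    exact (norm_add_le _ _).trans_eq (by rw [Complex.norm_natCast])
  rw [show (1 : ℂ) = ∑' n : ℕ, if n = 0 then 1 else 0 from (tsum_ite_eq 0 1).symm]
  refine tendsto_tsum_of_dominated_convergence hmajorant (fun n => ?_) ?_
  · rcases eq_or_ne n 0 with rfl | hn
    · simp [coeff_zero]
    · simpa [hn] using tendsto_coeff_c_add_natCast a b c hn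
  · filter_upwards [eventually_ge_atTop ⌈K + ‖c‖⌉₊] with M hM n
    refine norm_coeff_le hnorm_le hnorm_le (fun i => ?_) hK n
    have hM' : K + ‖c‖ ≤ M := Nat.ceil_le.1 hM
    have := norm_sub_norm_le ((M + i : ℕ) : ℂ) (-c)
    rw [sub_neg_eq_add, Complex.norm_natCast, norm_neg] at this
    push_cast at this
    rw [norm_ofReal_add_natCast (by positivity), show c + M + i = M + i + c by ring]
    linarith

theorem tsum_coeff_eq_Gamma (a b : ℂ) {c : ℂ} (hc : ∀ j : ℕ, c + j ≠ 0)
    (hcab : 0 < (c - a - b).re) :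
    ∑' n, coeff a b c n = Gamma c * Gamma (c - a - b) / (Gamma (c - a) * Gamma (c - b)) := by
  refine tendsto_nhds_unique (f := fun M : ℕ => _) (l := atTop)
    (tendsto_const_nhds.congr (tsum_coeff_eq_poch_ratio_mul a b hc hcab)) ?_
  simpa using (tendsto_poch_ratio a b c).mul (tendsto_tsum_coeff_c_add_natCast a b c)

end Hypergeometric

theorem tendsto_tsum_mul_pow {𝕜 ι : Type*} [NormedField 𝕜] [CompleteSpace 𝕜] {l : Filter ι}
    {f : ℕ → 𝕜} (hf : Summable fun n => ‖f n‖) {w : ι → 𝕜} (hw : Tendsto w l (𝓝 1))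
    (hw_le : ∀ᶠ x in l, ‖w x‖ ≤ 1) :
    Tendsto (fun x => ∑' n, f n * w x ^ n) l (𝓝 (∑' n, f n)) := by
  refine tendsto_tsum_of_dominated_convergence hf (fun n => ?_) ?_
  · simpa using (hw.pow n).const_mul (f n)
  · filter_upwards [hw_le] with x hx n
    rw [norm_mul, norm_pow]
    exact mul_le_of_le_one_right (norm_nonneg _) (pow_le_one₀ (norm_nonneg _) hx)

theorem Complex.tendsto_one_sub_cpow_mul_nhds_zero {s : ℂ} (hs : 0 < s.re) {g : ℂ → ℂ}
    (hg : ContinuousAt g 1) : Tendsto (fun z : ℂ => (1 - z) ^ s * g z) (𝓝 1) (𝓝 0) := by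
  have h0 : Tendsto (fun z : ℂ => 1 - z) (𝓝 1) (𝓝 0) := by
    simpa using (tendsto_const_nhds (x := (1 : ℂ))).sub (tendsto_id (x := 𝓝 (1 : ℂ)))
  have := ((continuousAt_cpow_const_of_re_pos (Or.inl le_rfl) hs).tendsto.comp h0).mul hg.tendsto
  rwa [zero_cpow (ne_zero_of_re_pos hs), zero_mul] at this

theorem Complex.eventually_nhdsLT_one_norm_lt {r : ℝ} (hr : 0 < r) :
    ∀ᶠ x : ℝ in 𝓝[<] 1, ‖(x : ℂ)‖ < 1 ∧ ‖(x : ℂ) - 1‖ < r := by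
  filter_upwards [Ioo_mem_nhdsLT (show max 0 (1 - r) < 1 by simp [hr])] with x ⟨hx0, hx1⟩
  rw [max_lt_iff] at hx0
  rw [← ofReal_one, ← ofReal_sub, norm_real, norm_real, Real.norm_of_nonneg hx0.1.le,
    Real.norm_of_nonpos (by linarith)]
  constructor <;> linarith

open Hypergeometric in
theorem stmt11_general (α β γ δ : ℂ) (hδ : δ = (α + β + 1 - γ) / 2) (hδ1 : δ.re < 1)
    (hγZ : ¬ ∃ m : ℤ, γ = (m : ℂ))
    (y01 : ℂ → ℂ)
    (hy01 : ∀ z : ℂ, ‖z‖ < 1 → y01 z = ∑' n : ℕ,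
      (∏ i ∈ Finset.range n, (α / 2 + (i : ℂ))) * (∏ i ∈ Finset.range n, (β / 2 + (i : ℂ))) /
        ((n ! : ℂ) * ∏ i ∈ Finset.range n, ((γ + 1) / 2 + (i : ℂ))) * z ^ (2 * n))
    (y1 y2 g : ℂ → ℂ)
    (hy1a : AnalyticAt ℂ y1 1) (hy1v : y1 1 = 1)
    (hga : AnalyticAt ℂ g 1)
    (hy2 : ∀ z : ℂ, y2 z = (1 - z) ^ ((1 : ℂ) - δ) * g z)
    (c1 c2 : ℂ) (r : ℝ) (hr : 0 < r)
    (hconn : ∀ z : ℂ, ‖z‖ < 1 → ‖z - 1‖ < r → y01 z = c1 * y1 z + c2 * y2 z) :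
    c1 = Complex.Gamma ((γ + 1 - α - β) / 2) * Complex.Gamma ((γ + 1) / 2) /
        (Complex.Gamma ((γ + 1 - α) / 2) * Complex.Gamma ((γ + 1 - β) / 2)) := by
  have hc : ∀ j : ℕ, (γ + 1) / 2 + j ≠ 0 := fun j h =>
    hγZ ⟨-(2 * j + 1), by push_cast; linear_combination 2 * h⟩
  have hcab : 0 < ((γ + 1) / 2 - α / 2 - β / 2).re := by
    rw [show (γ + 1) / 2 - α / 2 - β / 2 = 1 - δ by rw [hδ]; ring]
    simpa using hδ1
  have hz : Tendsto (fun x : ℝ => (x : ℂ)) (𝓝[<] 1) (𝓝 1) :=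
    (continuous_ofReal.tendsto' 1 1 ofReal_one).mono_left nhdsWithin_le_nhds
  have hdisc := eventually_nhdsLT_one_norm_lt hr
  have hseries : Tendsto (fun x : ℝ => y01 x) (𝓝[<] 1)
      (𝓝 (∑' n, coeff (α / 2) (β / 2) ((γ + 1) / 2) n)) := by
    refine (tendsto_tsum_mul_pow (summable_norm_coeff _ _ hc hcab) (by simpa using hz.pow 2)
      (hdisc.mono fun x hx => by simpa using hx.1.le)).congr' (hdisc.mono fun x hx => ?_)
    simp_rw [hy01 _ hx.1, pow_mul]
    rfl
  have hconnection : Tendsto (fun x : ℝ => y01 x) (𝓝[<] 1) (𝓝 c1) := by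
    have hy1 : Tendsto y1 (𝓝 1) (𝓝 1) := by simpa only [hy1v] using hy1a.continuousAt.tendsto
    have hy2 : Tendsto y2 (𝓝 1) (𝓝 0) := by
      simpa only [← funext hy2] using
        tendsto_one_sub_cpow_mul_nhds_zero (s := 1 - δ) (by simpa using hδ1) hga.continuousAt
    refine Tendsto.congr' (hdisc.mono fun x hx => (hconn x hx.1 hx.2).symm) ?_
    have := ((hy1.const_mul c1).add (hy2.const_mul c2)).comp hz
    rwa [mul_one, mul_zero, add_zero] at this
  rw [tendsto_nhds_unique hconnection hseries, tsum_coeff_eq_Gamma _ _ hc hcab, mul_comm]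
  ring_nf

/-- The connection coefficient `c⁺₁₁` of `y₀₁(z) = Σ (α/2)_n(β/2)_n/(n!((γ+1)/2)_n) z^{2n}`
at `z = 1` equals `Γ((γ+1-α-β)/2)Γ((γ+1)/2)/(Γ((γ+1-α)/2)Γ((γ+1-β)/2))`. -/
theorem stmt11 (α β γ δ : ℂ) (hδ : δ = (α + β + 1 - γ) / 2) (hδ1 : δ.re < 1)
    (hγZ : ¬ ∃ m : ℤ, γ = (m : ℂ)) (hδZ : ¬ ∃ m : ℤ, δ = (m : ℂ))
    (hαβZ : ¬ ∃ m : ℤ, α - β = (m : ℂ))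
    (y01 : ℂ → ℂ)
    (hy01 : ∀ z : ℂ, ‖z‖ < 1 → y01 z = ∑' n : ℕ,
      (∏ i ∈ Finset.range n, (α / 2 + (i : ℂ))) * (∏ i ∈ Finset.range n, (β / 2 + (i : ℂ))) /
        ((n ! : ℂ) * ∏ i ∈ Finset.range n, ((γ + 1) / 2 + (i : ℂ))) * z ^ (2 * n))
    (y1 y2 g : ℂ → ℂ)
    (hy1a : AnalyticAt ℂ y1 1) (hy1v : y1 1 = 1)
    (hga : AnalyticAt ℂ g 1) (hgv : g 1 = 1)
    (hy2 : ∀ z : ℂ, y2 z = (1 - z) ^ ((1 : ℂ) - δ) * g z)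
    (hode1 : ∀ z : ℂ, z ≠ 1 → ‖z - 1‖ < 1 → heunOpSub α β γ δ y1 z = 0)
    (hode2 : ∀ z : ℂ, z ≠ 1 → ‖z - 1‖ < 1 → heunOpSub α β γ δ y2 z = 0)
    (c1 c2 : ℂ) (r : ℝ) (hr : 0 < r)
    (hconn : ∀ z : ℂ, ‖z‖ < 1 → ‖z - 1‖ < r → y01 z = c1 * y1 z + c2 * y2 z) :
    c1 = Complex.Gamma ((γ + 1 - α - β) / 2) * Complex.Gamma ((γ + 1) / 2) /
        (Complex.Gamma ((γ + 1 - α) / 2) * Complex.Gamma ((γ + 1 - β) / 2)) :=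
  stmt11_general α β γ δ hδ hδ1 hγZ y01 hy01 y1 y2 g hy1a hy1v hga hy2 c1 c2 r hr hconn
end
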